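/- arXiv:2405.12157 — 9 statements merged into one kernel-verified Lean document; each statement's English description precedes it below -/
import Mathlib

section
/- Let q be a positive completely symmetric probability distribution on I_V (q_i = q_j whenever j ∈ D(i)), and let μ_s (s = 1,…,T) and σ_{st} (s,t = 1,…,T) be given reals. Let C be the set of positive probability distributions π on I_V satisfying: Σ_{j∈D(i)} π_j = |D(i)|·q_i for every cell i, Σ_{i∈I_V} u_{i_s} π_i = μ_s for every s, and Σ_{i∈I_V} u_{i_s} u_{i_t} π_i = σ_{st} for all s,t (note that π^S = q for every π ∈ C). Suppose π* ∈ C and there exist α ∈ ℝ^T, a symmetric real T×T matrix B, and an orbit-invariant γ : I_V → ℝ (γ_i = γ_j whenever j ∈ D(i)) such that F(π*_i/q_i) = u_iᵀα + u_iᵀB u_i + γ_i for all i ∈ I_V. Then π* is the unique minimizer of D_f(·‖q) on C: for every π ∈ C with π ≠ π*, D_f(π‖q) > D_f(π*‖q). (Theorem 1, optimality and uniqueness.) -/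
open Finset

namespace GSf

variable {r T : ℕ}

/-- A cell of the `r^T` contingency table. -/
abbrev Cell (r T : ℕ) := Fin T → Fin r

/-- `orbit i = D(i)`: the set of coordinate permutations of the cell `i`. -/
def orbit (i : Cell r T) : Finset (Cell r T) :=
  Finset.univ.filter fun j => ∃ σ : Equiv.Perm (Fin T), j = i ∘ σ

/-- Symmetrization `π^S_i = (1/|D(i)|) ∑_{j ∈ D(i)} π_j`. -/
noncomputable def symmz (π : Cell r T → ℝ) (i : Cell r T) : ℝ :=
  (∑ j ∈ orbit i, π j) / ((orbit i).card : ℝ)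

/-- The quadratic predictor `u_iᵀ α + u_iᵀ B u_i`. -/
def quadForm (u : Fin r → ℝ) (α : Fin T → ℝ) (B : Matrix (Fin T) (Fin T) ℝ)
    (i : Cell r T) : ℝ :=
  (∑ s, α s * u (i s)) + ∑ s, ∑ t, B s t * u (i s) * u (i t)

/-- A function on cells is orbit-invariant if it is constant on each `D(i)`. -/
def OrbitInvariant (γ : Cell r T → ℝ) : Prop :=
  ∀ i j, j ∈ orbit i → γ i = γ j

/-- The `f`-divergence `D_f(p ∥ q) = ∑ q_i f(p_i/q_i)`. -/
noncomputable def Df (f : ℝ → ℝ) (p q : Cell r T → ℝ) : ℝ :=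
  ∑ i, q i * f (p i / q i)

/-- Conditional probability of a cell given its symmetric set. -/
noncomputable def condProb (π : Cell r T → ℝ) (i : Cell r T) : ℝ :=
  π i / ∑ j ∈ orbit i, π j

/-- Complete symmetry (S) model. -/
def CompletelySymmetric (π : Cell r T → ℝ) : Prop :=
  ∀ i, ∀ j ∈ orbit i, π i = π j

/-- Marginal mean `μ_s = ∑_i u_{i_s} π_i`. -/
noncomputable def margMean (u : Fin r → ℝ) (π : Cell r T → ℝ) (s : Fin T) : ℝ :=
  ∑ i, u (i s) * π i

/-- Marginal second moment `∑_i u_{i_s}² π_i`. -/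
noncomputable def margSecond (u : Fin r → ℝ) (π : Cell r T → ℝ) (s : Fin T) : ℝ :=
  ∑ i, u (i s) ^ 2 * π i

/-- Mixed moment `∑_i u_{i_s} u_{i_t} π_i`. -/
noncomputable def mixedMoment (u : Fin r → ℝ) (π : Cell r T → ℝ) (s t : Fin T) : ℝ :=
  ∑ i, u (i s) * u (i t) * π i

/-- Marginal variance `σ_s²`. -/
noncomputable def margVar (u : Fin r → ℝ) (π : Cell r T → ℝ) (s : Fin T) : ℝ :=
  margSecond u π s - (margMean u π s) ^ 2

/-- Marginal correlation `ρ_{st}`. -/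
noncomputable def margCorr (u : Fin r → ℝ) (π : Cell r T → ℝ) (s t : Fin T) : ℝ :=
  (mixedMoment u π s t - margMean u π s * margMean u π t) /
    (Real.sqrt (margVar u π s) * Real.sqrt (margVar u π t))

/-- The GS[f] model. -/
def IsGSf (u : Fin r → ℝ) (F : ℝ → ℝ) (π : Cell r T → ℝ) : Prop :=
  ∃ (α : Fin T → ℝ) (B : Matrix (Fin T) (Fin T) ℝ) (γ : Cell r T → ℝ),
    B.IsSymm ∧ OrbitInvariant γ ∧
    ∀ i, F (π i / symmz π i) = quadForm u α B i + γ i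


/-- The constraint set `C`: positive distributions with the prescribed orbit sums,
marginal means and second-order mixed moments. -/
def InConstraintSet (u : Fin r → ℝ) (q : Cell r T → ℝ) (μ : Fin T → ℝ)
    (σm : Fin T → Fin T → ℝ) (π : Cell r T → ℝ) : Prop :=
  (∀ i, 0 < π i) ∧ (∑ i, π i) = 1 ∧
  (∀ i, ∑ j ∈ orbit i, π j = ((orbit i).card : ℝ) * q i) ∧
  (∀ s, margMean u π s = μ s) ∧
  (∀ s t, mixedMoment u π s t = σm s t)


lemma mem_orbit_iff {i j : Cell r T} : j ∈ orbit i ↔ ∃ σ : Equiv.Perm (Fin T), j = i ∘ σ := by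
  simp [orbit]

lemma mem_orbit_self (i : Cell r T) : i ∈ orbit i :=
  mem_orbit_iff.2 ⟨1, rfl⟩

lemma orbit_eq_of_mem {i j : Cell r T} (h : j ∈ orbit i) : orbit j = orbit i := by
  obtain ⟨σ, rfl⟩ := mem_orbit_iff.1 h
  ext k
  simp only [mem_orbit_iff]
  constructor
  · rintro ⟨τ, rfl⟩; exact ⟨σ * τ, rfl⟩
  · rintro ⟨τ, rfl⟩; exact ⟨σ⁻¹ * τ, by ext t; simp [Equiv.Perm.mul_apply, Function.comp]⟩

lemma mem_orbit_symm {i j : Cell r T} (h : j ∈ orbit i) : i ∈ orbit j := by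
  rw [orbit_eq_of_mem h]; exact mem_orbit_self i

lemma sum_orbit_avg (h : Cell r T → ℝ) :
    ∑ i : Cell r T, (∑ j ∈ orbit i, h j) / ((orbit i).card : ℝ) = ∑ i : Cell r T, h i := by
  have key : ∀ i : Cell r T, (∑ j ∈ orbit i, h j) / ((orbit i).card : ℝ)
      = ∑ j : Cell r T, if j ∈ orbit i then h j / ((orbit j).card : ℝ) else 0 := by
    intro i
    rw [Finset.sum_ite_mem, Finset.univ_inter, Finset.sum_div]
    refine Finset.sum_congr rfl fun j hj => ?_
    rw [orbit_eq_of_mem hj]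
  simp_rw [key]
  rw [Finset.sum_comm]
  refine Finset.sum_congr rfl fun j _ => ?_
  have hiff : ∀ i : Cell r T, (if j ∈ orbit i then h j / ((orbit j).card : ℝ) else 0)
      = if i ∈ orbit j then h j / ((orbit j).card : ℝ) else 0 := by
    intro i
    congr 1
    simp only [eq_iff_iff]
    exact ⟨mem_orbit_symm, mem_orbit_symm⟩
  simp_rw [hiff]
  rw [Finset.sum_ite_mem, Finset.univ_inter, Finset.sum_const, nsmul_eq_mul]
  have hc : (0 : ℝ) < (orbit j).card := by
    exact_mod_cast Finset.card_pos.2 ⟨j, mem_orbit_self j⟩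
  field_simp

lemma tangent_lt {f F : ℝ → ℝ}
    (hconv : StrictConvexOn ℝ (Set.Ioi 0) f)
    (hderiv : ∀ x ∈ Set.Ioi (0 : ℝ), HasDerivAt f (F x) x)
    {x y : ℝ} (hx : x ∈ Set.Ioi (0:ℝ)) (hy : y ∈ Set.Ioi (0:ℝ)) (hxy : x ≠ y) :
    f y + F y * (x - y) < f x := by
  rcases lt_or_gt_of_ne hxy with h | h
  · have := hconv.slope_lt_of_hasDerivAt hx hy h (hderiv y hy)
    rw [slope_def_field] at this
    have hne : y - x > 0 := by linarith
    rw [div_lt_iff₀ hne] at this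
    nlinarith
  · have := hconv.lt_slope_of_hasDerivAt hy hx h (hderiv y hy)
    rw [slope_def_field] at this
    have hne : x - y > 0 := by linarith
    rw [lt_div_iff₀ hne] at this
    nlinarith

lemma sum_gamma_eq {γ q ρ : Cell r T → ℝ} (hγ : OrbitInvariant γ)
    (hρ : ∀ i, ∑ j ∈ orbit i, ρ j = ((orbit i).card : ℝ) * q i) :
    ∑ i, γ i * ρ i = ∑ i, γ i * q i := by
  rw [← sum_orbit_avg (fun i => γ i * ρ i)]
  refine Finset.sum_congr rfl fun i _ => ?_
  have h1 : ∑ j ∈ orbit i, γ j * ρ j = γ i * ∑ j ∈ orbit i, ρ j := by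
    rw [Finset.mul_sum]
    exact Finset.sum_congr rfl fun j hj => by rw [← hγ i j hj]
  have hc : (0 : ℝ) < (orbit i).card := by
    exact_mod_cast Finset.card_pos.2 ⟨i, mem_orbit_self i⟩
  rw [h1, hρ i]
  field_simp

lemma sum_quadForm_eq (u : Fin r → ℝ) (α : Fin T → ℝ) (B : Matrix (Fin T) (Fin T) ℝ)
    (ρ : Cell r T → ℝ) :
    ∑ i, quadForm u α B i * ρ i
      = (∑ s, α s * margMean u ρ s) + ∑ s, ∑ t, B s t * mixedMoment u ρ s t := by
  have h1 : ∀ i : Cell r T, quadForm u α B i * ρ i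
      = (∑ s, α s * (u (i s) * ρ i)) + ∑ s, ∑ t, B s t * (u (i s) * u (i t) * ρ i) := by
    intro i
    simp only [quadForm, add_mul, Finset.sum_mul]
    congr 1
    · exact Finset.sum_congr rfl fun s _ => by ring
    · exact Finset.sum_congr rfl fun s _ => Finset.sum_congr rfl fun t _ => by ring
  simp_rw [h1]
  rw [Finset.sum_add_distrib]
  congr 1
  · rw [Finset.sum_comm]
    refine Finset.sum_congr rfl fun s _ => ?_
    rw [margMean, Finset.mul_sum]
  · rw [Finset.sum_comm]
    refine Finset.sum_congr rfl fun s _ => ?_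
    rw [Finset.sum_comm]
    refine Finset.sum_congr rfl fun t _ => ?_
    rw [mixedMoment, Finset.mul_sum]


/-- Theorem 1, optimality and uniqueness: a member of the constraint
set `C` satisfying the GS[f] structure is the unique minimizer of `D_f(· ∥ q)` on `C`. -/
theorem stmt0 (r T : ℕ) (hr : 2 ≤ r) (hT : 2 ≤ T)
    (u : Fin r → ℝ) (hu : StrictMono u)
    (f F : ℝ → ℝ) (hf1 : f 1 = 0)
    (hconv : StrictConvexOn ℝ (Set.Ioi 0) f)
    (hderiv : ∀ x ∈ Set.Ioi (0 : ℝ), HasDerivAt f (F x) x)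
    (hF2 : ∀ x ∈ Set.Ioi (0 : ℝ), DifferentiableAt ℝ F x)
    (q : Cell r T → ℝ) (hq : ∀ i, 0 < q i) (hqsum : ∑ i, q i = 1)
    (hqsym : CompletelySymmetric q)
    (μ : Fin T → ℝ) (σm : Fin T → Fin T → ℝ)
    (πs : Cell r T → ℝ) (hπs : InConstraintSet u q μ σm πs)
    (α : Fin T → ℝ) (B : Matrix (Fin T) (Fin T) ℝ) (hB : B.IsSymm)
    (γ : Cell r T → ℝ) (hγ : OrbitInvariant γ)
    (hGS : ∀ i, F (πs i / q i) = quadForm u α B i + γ i) :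
    ∀ π : Cell r T → ℝ, InConstraintSet u q μ σm π → π ≠ πs →
      Df f πs q < Df f π q := by
  intro π hπ hne
  obtain ⟨hπpos, hπsum, hπorb, hπmean, hπmix⟩ := hπ
  obtain ⟨hπspos, hπssum, hπsorb, hπsmean, hπsmix⟩ := hπs
  have hlin : ∀ ρ : Cell r T → ℝ,
      (∀ i, ∑ j ∈ orbit i, ρ j = ((orbit i).card : ℝ) * q i) →
      (∀ s, margMean u ρ s = μ s) → (∀ s t, mixedMoment u ρ s t = σm s t) →
      ∑ i, F (πs i / q i) * ρ i
        = (∑ s, α s * μ s) + (∑ s, ∑ t, B s t * σm s t) + ∑ i, γ i * q i := by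
    intro ρ horb hmean hmix
    have h0 : ∑ i, F (πs i / q i) * ρ i
        = ∑ i, quadForm u α B i * ρ i + ∑ i, γ i * ρ i := by
      rw [← Finset.sum_add_distrib]
      refine Finset.sum_congr rfl fun i _ => ?_
      rw [hGS i]; ring
    rw [h0, sum_quadForm_eq, sum_gamma_eq hγ horb]
    congr 2
    · exact Finset.sum_congr rfl fun s _ => by rw [hmean]
    · exact Finset.sum_congr rfl fun s _ =>
        Finset.sum_congr rfl fun t _ => by rw [hmix]
  have hzero : ∑ i, F (πs i / q i) * (π i - πs i) = 0 := by
    have e1 := hlin π hπorb hπmean hπmix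
    have e2 := hlin πs hπsorb hπsmean hπsmix
    have h0 : ∑ i, F (πs i / q i) * (π i - πs i)
        = ∑ i, F (πs i / q i) * π i - ∑ i, F (πs i / q i) * πs i := by
      rw [← Finset.sum_sub_distrib]
      exact Finset.sum_congr rfl fun i _ => by ring
    rw [h0, e1, e2, sub_self]
  have hterm : ∀ i : Cell r T,
      q i * f (πs i / q i) + F (πs i / q i) * (π i - πs i) ≤ q i * f (π i / q i) := by
    intro i
    rcases eq_or_ne (π i) (πs i) with h | h
    · rw [h]; simp
    · have hx : π i / q i ∈ Set.Ioi (0:ℝ) := Set.mem_Ioi.2 (div_pos (hπpos i) (hq i))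
      have hy : πs i / q i ∈ Set.Ioi (0:ℝ) := Set.mem_Ioi.2 (div_pos (hπspos i) (hq i))
      have hxy : π i / q i ≠ πs i / q i := fun hc => h (by have hq0 := (hq i).ne'; field_simp at hc; exact hc)
      have htan := tangent_lt hconv hderiv hx hy hxy
      have hqpos := hq i
      have hrw : F (πs i / q i) * (π i - πs i)
          = q i * (F (πs i / q i) * (π i / q i - πs i / q i)) := by
        field_simp
      rw [hrw]
      nlinarith [htan, hqpos]
  have hstrict : ∃ i : Cell r T,
      q i * f (πs i / q i) + F (πs i / q i) * (π i - πs i) < q i * f (π i / q i) := by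
    obtain ⟨i, h⟩ := Function.ne_iff.1 hne
    refine ⟨i, ?_⟩
    have hx : π i / q i ∈ Set.Ioi (0:ℝ) := Set.mem_Ioi.2 (div_pos (hπpos i) (hq i))
    have hy : πs i / q i ∈ Set.Ioi (0:ℝ) := Set.mem_Ioi.2 (div_pos (hπspos i) (hq i))
    have hxy : π i / q i ≠ πs i / q i := fun hc => h (by have hq0 := (hq i).ne'; field_simp at hc; exact hc)
    have htan := tangent_lt hconv hderiv hx hy hxy
    have hqpos := hq i
    have hrw : F (πs i / q i) * (π i - πs i)
        = q i * (F (πs i / q i) * (π i / q i - πs i / q i)) := by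
      field_simp
    rw [hrw]
    nlinarith [htan, hqpos]
  have hsum : ∑ i, (q i * f (πs i / q i) + F (πs i / q i) * (π i - πs i))
      < ∑ i : Cell r T, q i * f (π i / q i) :=
    Finset.sum_lt_sum (fun i _ => hterm i) (hstrict.imp fun i h => ⟨Finset.mem_univ i, h⟩)
  calc Df f πs q = ∑ i, (q i * f (πs i / q i) + F (πs i / q i) * (π i - πs i)) := by
        rw [Finset.sum_add_distrib, hzero, add_zero]; rfl
    _ < Df f π q := hsum


end GSf
end

section
/- Let q be a positive completely symmetric probability distribution on I_V (q_i = q_j whenever j ∈ D(i)), and let μ_s (s = 1,…,T) and σ_{st} (s,t = 1,…,T) be given reals. Let C be the set of positive probability distributions π on I_V satisfying: Σ_{j∈D(i)} π_j = |D(i)|·q_i for every cell i, Σ_{i∈I_V} u_{i_s} π_i = μ_s for every s, and Σ_{i∈I_V} u_{i_s} u_{i_t} π_i = σ_{st} for all s,t. If π* ∈ C satisfies D_f(π*‖q) ≤ D_f(π‖q) for all π ∈ C, then there exist α ∈ ℝ^T, a symmetric real T×T matrix B, and an orbit-invariant γ : I_V → ℝ (γ_i = γ_j whenever j ∈ D(i))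 such that F(π*_i/q_i) = u_iᵀα + u_iᵀB u_i + γ_i for all i ∈ I_V; that is, any minimizer of the f-divergence from the complete symmetry model under these constraints satisfies the GS[f] model. (Theorem 1, Lagrange characterization of the minimizer.) -/
open Finset

namespace GSf

variable {r T : ℕ}

lemma mem_orbit_congr {i j i0 : Cell r T} (h : j ∈ orbit i) :
    i ∈ orbit i0 ↔ j ∈ orbit i0 := by
  constructor
  · intro hi
    rw [← orbit_eq_of_mem hi]
    exact h
  · intro hjf
    rw [← orbit_eq_of_mem hjf, orbit_eq_of_mem h]
    exact mem_orbit_self i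

/-- Finite-dimensional duality: a vector orthogonal to everything orthogonal to a
finite family lies in the span of the family. -/
lemma mem_span_of_orth {n K : Type*} [Fintype n] [Fintype K]
    (g : K → EuclideanSpace ℝ n) (w : EuclideanSpace ℝ n)
    (h : ∀ v : EuclideanSpace ℝ n, (∀ k, ∑ i, g k i * v i = 0) → ∑ i, w i * v i = 0) :
    w ∈ Submodule.span ℝ (Set.range g) := by
  set S := Submodule.span ℝ (Set.range g) with hS
  have hmem : w ∈ Sᗮᗮ := by
    rw [Submodule.mem_orthogonal]
    intro v hv
    have hgen : ∀ k, ∑ i, g k i * v i = 0 := by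
      intro k
      have := (Submodule.mem_orthogonal S v).1 hv (g k)
        (Submodule.subset_span ⟨k, rfl⟩)
      simpa [PiLp.inner_apply, RCLike.inner_apply, mul_comm] using this
    have h2 := h v hgen
    simp only [PiLp.inner_apply, RCLike.inner_apply, conj_trivial]
    rw [← h2]
  rwa [Submodule.orthogonal_orthogonal] at hmem

/-- First-order condition at the minimizer: the gradient of the `f`-divergence is
orthogonal to every feasible direction. -/
lemma key_orth (u : Fin r → ℝ) (f F : ℝ → ℝ)
    (hderiv : ∀ x ∈ Set.Ioi (0:ℝ), HasDerivAt f (F x) x)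
    (q : Cell r T → ℝ) (hq : ∀ i, 0 < q i)
    (μ : Fin T → ℝ) (σm : Fin T → Fin T → ℝ)
    (πs : Cell r T → ℝ) (hπs : InConstraintSet u q μ σm πs)
    (hmin : ∀ π, InConstraintSet u q μ σm π → Df f πs q ≤ Df f π q)
    (v : Cell r T → ℝ)
    (hv0 : ∑ i, v i = 0)
    (hv1 : ∀ i, ∑ j ∈ orbit i, v j = 0)
    (hv2 : ∀ s, ∑ i, u (i s) * v i = 0)
    (hv3 : ∀ s t, ∑ i, u (i s) * u (i t) * v i = 0) :
    ∑ i, F (πs i / q i) * v i = 0 := by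
  obtain ⟨hpos, hsum, horb, hmean, hmom⟩ := hπs
  have hgd : HasDerivAt (fun ε => Df f (fun i => πs i + ε * v i) q)
      (∑ i, F (πs i / q i) * v i) 0 := by
    simp only [Df]
    apply HasDerivAt.fun_sum
    intro i _
    have hne : q i ≠ 0 := (hq i).ne'
    have h1 : HasDerivAt (fun ε : ℝ => (πs i + ε * v i) / q i) (1 * v i / q i) 0 :=
      (((hasDerivAt_id (0:ℝ)).mul_const (v i)).const_add (πs i)).div_const (q i)
    have hmem : (πs i + 0 * v i) / q i ∈ Set.Ioi (0:ℝ) := by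
      simpa using div_pos (hpos i) (hq i)
    have h2 := ((hderiv _ hmem).comp 0 h1).const_mul (q i)
    have heq : q i * (F ((πs i + 0 * v i) / q i) * (1 * v i / q i))
        = F (πs i / q i) * v i := by
      rw [zero_mul, add_zero]
      field_simp
    rw [← heq]
    simpa [Function.comp] using h2
  have hloc : IsLocalMin (fun ε => Df f (fun i => πs i + ε * v i) q) 0 := by
    have hev : ∀ᶠ ε : ℝ in nhds 0, ∀ i, 0 < πs i + ε * v i := by
      rw [Filter.eventually_all]
      intro i
      have hc : Filter.Tendsto (fun ε : ℝ => πs i + ε * v i) (nhds 0) (nhds (πs i)) := by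
        have : Filter.Tendsto (fun ε : ℝ => πs i + ε * v i) (nhds 0)
            (nhds (πs i + 0 * v i)) :=
          Filter.Tendsto.const_add _ (Filter.Tendsto.mul_const _ Filter.tendsto_id)
        simpa using this
      exact hc.eventually (eventually_gt_nhds (hpos i))
    filter_upwards [hev] with ε hε
    have hmemC : InConstraintSet u q μ σm (fun i => πs i + ε * v i) := by
      refine ⟨hε, ?_, ?_, ?_, ?_⟩
      · rw [Finset.sum_add_distrib, hsum, ← Finset.mul_sum, hv0, mul_zero, add_zero]
      · intro i
        rw [Finset.sum_add_distrib, horb i, ← Finset.mul_sum, hv1 i, mul_zero, add_zero]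
      · intro s
        have hrw : ∀ i : Cell r T, u (i s) * (πs i + ε * v i)
            = u (i s) * πs i + ε * (u (i s) * v i) := fun i => by ring
        simp only [margMean, hrw, Finset.sum_add_distrib, ← Finset.mul_sum, hv2 s,
          mul_zero, add_zero]
        exact hmean s
      · intro s t
        have hrw : ∀ i : Cell r T, u (i s) * u (i t) * (πs i + ε * v i)
            = u (i s) * u (i t) * πs i + ε * (u (i s) * u (i t) * v i) := fun i => by ring
        simp only [mixedMoment, hrw, Finset.sum_add_distrib, ← Finset.mul_sum, hv3 s t,
          mul_zero, add_zero]
        exact hmom s t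
    have h0 := hmin _ hmemC
    simpa using h0
  exact hloc.hasDerivAt_eq_zero hgd

/-- Generators of the span of constraint gradients. -/
noncomputable def gen (u : Fin r → ℝ) :
    (Cell r T ⊕ (Fin T ⊕ Fin T × Fin T)) ⊕ Unit → EuclideanSpace ℝ (Cell r T)
  | Sum.inl (Sum.inl i0) => WithLp.toLp 2 fun i => if i ∈ orbit i0 then (1:ℝ) else 0
  | Sum.inl (Sum.inr (Sum.inl s)) => WithLp.toLp 2 fun (i : Cell r T) => u (i s)
  | Sum.inl (Sum.inr (Sum.inr (s, t))) => WithLp.toLp 2 fun (i : Cell r T) => u (i s) * u (i t)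
  | Sum.inr _ => WithLp.toLp 2 fun _ => (1:ℝ)

/-- Theorem 1, Lagrange characterization: any minimizer of the
`f`-divergence from the complete symmetry model under the moment constraints
satisfies the GS[f] model. -/
theorem stmt1 (r T : ℕ) (hr : 2 ≤ r) (hT : 2 ≤ T)
    (u : Fin r → ℝ) (hu : StrictMono u)
    (f F : ℝ → ℝ) (hf1 : f 1 = 0)
    (hconv : StrictConvexOn ℝ (Set.Ioi 0) f)
    (hderiv : ∀ x ∈ Set.Ioi (0 : ℝ), HasDerivAt f (F x) x)
    (hF2 : ∀ x ∈ Set.Ioi (0 : ℝ), DifferentiableAt ℝ F x)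
    (q : Cell r T → ℝ) (hq : ∀ i, 0 < q i) (hqsum : ∑ i, q i = 1)
    (hqsym : CompletelySymmetric q)
    (μ : Fin T → ℝ) (σm : Fin T → Fin T → ℝ)
    (πs : Cell r T → ℝ) (hπs : InConstraintSet u q μ σm πs)
    (hmin : ∀ π : Cell r T → ℝ, InConstraintSet u q μ σm π → Df f πs q ≤ Df f π q) :
    ∃ (α : Fin T → ℝ) (B : Matrix (Fin T) (Fin T) ℝ) (γ : Cell r T → ℝ),
      B.IsSymm ∧ OrbitInvariant γ ∧
      ∀ i, F (πs i / q i) = quadForm u α B i + γ i := by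
  classical
  have hw : (show EuclideanSpace ℝ (Cell r T) from WithLp.toLp 2 fun i => F (πs i / q i))
      ∈ Submodule.span ℝ (Set.range (gen u)) := by
    apply mem_span_of_orth
    intro v hv
    have hv0 : ∑ i, v i = 0 := by simpa [gen] using hv (Sum.inr ())
    have hv1 : ∀ i, ∑ j ∈ orbit i, v j = 0 := by
      intro i0
      have := hv (Sum.inl (Sum.inl i0))
      simpa [gen, ite_mul, Finset.sum_ite_mem] using this
    have hv2 : ∀ s, ∑ i, u (i s) * v i = 0 := fun s => by
      simpa [gen] using hv (Sum.inl (Sum.inr (Sum.inl s)))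
    have hv3 : ∀ s t, ∑ i, u (i s) * u (i t) * v i = 0 := fun s t => by
      have := hv (Sum.inl (Sum.inr (Sum.inr (s, t))))
      simpa [gen, mul_assoc] using this
    exact key_orth u f F hderiv q hq μ σm πs hπs hmin v hv0 hv1 hv2 hv3
  obtain ⟨c, hc⟩ := (Submodule.mem_span_range_iff_exists_fun ℝ).1 hw
  have hcell : ∀ i : Cell r T, F (πs i / q i) = ∑ k, c k * gen u k i := by
    intro i
    have h : (∑ k, c k • gen u k) i = F (πs i / q i) := by rw [hc]
    rw [← h]
    have h1 : (∑ k, c k • gen u k) i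
        = EuclideanSpace.proj (𝕜 := ℝ) i (∑ k, c k • gen u k) := rfl
    rw [h1, map_sum]
    simp [PiLp.smul_apply]
  set B0 : Fin T → Fin T → ℝ := fun s t => c (Sum.inl (Sum.inr (Sum.inr (s, t)))) with hB0
  refine ⟨fun s => c (Sum.inl (Sum.inr (Sum.inl s))),
    Matrix.of fun s t => (B0 s t + B0 t s) / 2,
    fun i => (∑ i0, c (Sum.inl (Sum.inl i0)) * (if i ∈ orbit i0 then (1:ℝ) else 0))
      + c (Sum.inr ()), ?_, ?_, ?_⟩
  · ext s t
    simp only [Matrix.transpose_apply, Matrix.of_apply]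
    ring
  · intro i j hj
    have : ∀ i0 : Cell r T, (if i ∈ orbit i0 then (1:ℝ) else 0)
        = (if j ∈ orbit i0 then (1:ℝ) else 0) := fun i0 =>
      if_congr (mem_orbit_congr hj) rfl rfl
    simp only [this]
  · intro i
    rw [hcell i]
    have hsplit : ∑ k, c k * gen u k i
        = ((∑ i0, c (Sum.inl (Sum.inl i0)) * (if i ∈ orbit i0 then (1:ℝ) else 0))
            + c (Sum.inr ()))
          + ((∑ s, c (Sum.inl (Sum.inr (Sum.inl s))) * u (i s))
            + ∑ s, ∑ t, B0 s t * (u (i s) * u (i t))) := by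
      simp only [Fintype.sum_sum_type, Fintype.sum_prod_type]
      simp [gen, hB0]
      ring
    rw [hsplit, quadForm]
    have hswap : ∑ s, ∑ t, B0 t s * u (i s) * u (i t)
        = ∑ s, ∑ t, B0 s t * u (i s) * u (i t) := by
      rw [Finset.sum_comm]
      exact Finset.sum_congr rfl fun s _ => Finset.sum_congr rfl fun t _ => by ring
    have hsym : ∑ s, ∑ t, (Matrix.of fun s t => (B0 s t + B0 t s) / 2) s t
          * u (i s) * u (i t)
        = ∑ s, ∑ t, B0 s t * (u (i s) * u (i t)) := by
      have expand : ∀ s t : Fin T, (Matrix.of fun s t => (B0 s t + B0 t s) / 2) s t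
            * u (i s) * u (i t)
          = B0 s t * u (i s) * u (i t) / 2 + B0 t s * u (i s) * u (i t) / 2 := by
        intro s t
        simp only [Matrix.of_apply]
        ring
      simp_rw [expand, Finset.sum_add_distrib, ← Finset.sum_div, hswap]
      rw [← add_div]
      rw [show ∀ x : ℝ, (x + x) / 2 = x from fun x => by ring]
      exact Finset.sum_congr rfl fun s _ => Finset.sum_congr rfl fun t _ => by ring
    rw [hsym]
    ring


end GSf
end

section
/- Assume T ≥ 3. A positive probability distribution π on I_V satisfies the complete symmetry (S) model if and only if π satisfies both the GS[f] model and the ME₂ model; equivalently, if and only if the GS[f], ME, VE and CE models all hold. (Theorem 2 and Corollary 1.) -/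
open Finset

namespace GSf

variable {r T : ℕ}

/-- Marginal mean equality (ME) model. -/
def MEmodel (u : Fin r → ℝ) (π : Cell r T → ℝ) : Prop :=
  ∀ s t, margMean u π s = margMean u π t

/-- Marginal variance equality (VE) model. -/
def VEmodel (u : Fin r → ℝ) (π : Cell r T → ℝ) : Prop :=
  ∀ s t, margVar u π s = margVar u π t

/-- Marginal correlation equality (CE) model. -/
def CEmodel (u : Fin r → ℝ) (π : Cell r T → ℝ) : Prop :=
  ∀ s t s' t' : Fin T, s ≠ t → s' ≠ t' → margCorr u π s t = margCorr u π s' t'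

/-- Second-moment equality (ME₂) model: ME, VE and CE all hold. -/
def ME2model (u : Fin r → ℝ) (π : Cell r T → ℝ) : Prop :=
  MEmodel u π ∧ VEmodel u π ∧ CEmodel u π

lemma comp_mem_orbit (i : Cell r T) (σ : Equiv.Perm (Fin T)) : i ∘ σ ∈ orbit i :=
  mem_orbit_iff.2 ⟨σ, rfl⟩
lemma card_orbit_pos (i : Cell r T) : 0 < ((orbit i).card : ℝ) := by
  exact_mod_cast Finset.card_pos.2 ⟨i, mem_orbit_self i⟩

-- new material
lemma symmz_eq_of_mem (π : Cell r T → ℝ) {i j : Cell r T} (h : j ∈ orbit i) :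
    symmz π j = symmz π i := by
  rw [symmz, symmz, orbit_eq_of_mem h]
lemma symmz_pos (π : Cell r T → ℝ) (hπ : ∀ i, 0 < π i) (i : Cell r T) :
    0 < symmz π i :=
  div_pos (Finset.sum_pos (fun j _ => hπ j) ⟨i, mem_orbit_self i⟩) (card_orbit_pos i)

/-- Key exchange lemma: for an orbit-invariant `γ`,
`∑ symmz π * γ = ∑ π * γ`. -/
lemma sum_symmz_mul (π γ : Cell r T → ℝ) (hγ : OrbitInvariant γ) :
    ∑ i, symmz π i * γ i = ∑ i, π i * γ i := by
  have key : ∀ i : Cell r T, symmz π i * γ i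
      = ∑ j ∈ orbit i, π j * γ i / ((orbit i).card : ℝ) := by
    intro i
    rw [symmz, div_mul_eq_mul_div, Finset.sum_mul, Finset.sum_div]
  calc ∑ i, symmz π i * γ i
      = ∑ i : Cell r T, ∑ j ∈ orbit i, π j * γ i / ((orbit i).card : ℝ) := by
        simp_rw [key]
    _ = ∑ j : Cell r T, ∑ i ∈ orbit j, π j * γ i / ((orbit i).card : ℝ) := by
        rw [Finset.sum_comm' (t' := Finset.univ) (s' := fun j => orbit j)]
        intro i j
        simp only [Finset.mem_univ, true_and, and_true]
        exact ⟨mem_orbit_symm, mem_orbit_symm⟩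
    _ = ∑ j : Cell r T, π j * γ j := by
        refine Finset.sum_congr rfl fun j _ => ?_
        have : ∀ i ∈ orbit j, π j * γ i / ((orbit i).card : ℝ)
            = π j * γ j / ((orbit j).card : ℝ) := by
          intro i hi
          rw [← hγ j i hi, orbit_eq_of_mem hi]
        rw [Finset.sum_congr rfl this, Finset.sum_const, nsmul_eq_mul]
        have hc : ((orbit j).card : ℝ) ≠ 0 := ne_of_gt (card_orbit_pos j)
        field_simp
lemma sum_sub_symmz_mul (π γ : Cell r T → ℝ) (hγ : OrbitInvariant γ) :
    ∑ i, (π i - symmz π i) * γ i = 0 := by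
  simp_rw [sub_mul, Finset.sum_sub_distrib, sum_symmz_mul π γ hγ, sub_self]

/-- Reindexing a sum over cells by a coordinate permutation. -/
lemma sum_comp_perm (g : Cell r T → ℝ) (σ : Equiv.Perm (Fin T)) :
    ∑ i : Cell r T, g (i ∘ σ) = ∑ i, g i := by
  apply Fintype.sum_bijective (fun i : Cell r T => i ∘ σ)
  · constructor
    · intro a b h
      funext x
      have := congrFun h (σ.symm x)
      simpa using this
    · intro b
      refine ⟨b ∘ σ.symm, ?_⟩
      funext x; simp
  · intro i; rfl
def PermInv (p : Cell r T → ℝ) : Prop := ∀ (σ : Equiv.Perm (Fin T)) i, p (i ∘ σ) = p i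
lemma symmz_permInv (π : Cell r T → ℝ) : PermInv (symmz π) := fun σ i =>
  symmz_eq_of_mem π (comp_mem_orbit i σ)
lemma sum_perm_inv {p : Cell r T → ℝ} (hp : PermInv p) (g : Cell r T → ℝ)
    (σ : Equiv.Perm (Fin T)) :
    ∑ i, g (i ∘ σ) * p i = ∑ i, g i * p i := by
  calc ∑ i, g (i ∘ σ) * p i = ∑ i, g (i ∘ σ) * p (i ∘ σ) := by
        simp_rw [hp σ]
    _ = ∑ i, g i * p i := sum_comp_perm (fun i => g i * p i) σ
variable {u : Fin r → ℝ}
lemma margMean_permInv {p : Cell r T → ℝ} (hp : PermInv p) (σ : Equiv.Perm (Fin T))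
    (s : Fin T) : margMean u p (σ s) = margMean u p s :=
  sum_perm_inv hp (fun i => u (i s)) σ
lemma margSecond_permInv {p : Cell r T → ℝ} (hp : PermInv p) (σ : Equiv.Perm (Fin T))
    (s : Fin T) : margSecond u p (σ s) = margSecond u p s :=
  sum_perm_inv hp (fun i => u (i s) ^ 2) σ
lemma mixedMoment_permInv {p : Cell r T → ℝ} (hp : PermInv p) (σ : Equiv.Perm (Fin T))
    (s t : Fin T) : mixedMoment u p (σ s) (σ t) = mixedMoment u p s t :=
  sum_perm_inv hp (fun i => u (i s) * u (i t)) σ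
lemma margMean_eq_of_permInv {p : Cell r T → ℝ} (hp : PermInv p) (s t : Fin T) :
    margMean u p s = margMean u p t := by
  have := margMean_permInv (u := u) hp (Equiv.swap s t) t
  rwa [Equiv.swap_apply_right] at this
lemma margSecond_eq_of_permInv {p : Cell r T → ℝ} (hp : PermInv p) (s t : Fin T) :
    margSecond u p s = margSecond u p t := by
  have := margSecond_permInv (u := u) hp (Equiv.swap s t) t
  rwa [Equiv.swap_apply_right] at this
lemma exists_perm_pair {s t s' t' : Fin T} (hst : s ≠ t) (h' : s' ≠ t') :
    ∃ σ : Equiv.Perm (Fin T), σ s = s' ∧ σ t = t' := by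
  refine ⟨(Equiv.swap s s').trans (Equiv.swap ((Equiv.swap s s') t) t'), ?_, ?_⟩
  · have h1 : (Equiv.swap s s') s = s' := Equiv.swap_apply_left s s'
    have h2 : s' ≠ (Equiv.swap s s') t :=
      fun h => hst ((Equiv.swap s s').injective (h1.trans h))
    simp only [Equiv.trans_apply, h1]
    exact Equiv.swap_apply_of_ne_of_ne h2 h'
  · simp [Equiv.trans_apply]
lemma mixedMoment_eq_of_permInv {p : Cell r T → ℝ} (hp : PermInv p)
    {s t s' t' : Fin T} (hst : s ≠ t) (h' : s' ≠ t') :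
    mixedMoment u p s t = mixedMoment u p s' t' := by
  obtain ⟨σ, h1, h2⟩ := exists_perm_pair hst h'
  have := mixedMoment_permInv (u := u) hp σ s t
  rw [h1, h2] at this
  exact this.symm
lemma completelySymmetric_permInv {π : Cell r T → ℝ}
    (h : ∀ i, ∀ j ∈ orbit i, π i = π j) : PermInv π := fun σ i =>
  (h i (i ∘ σ) (comp_mem_orbit i σ)).symm

/-- The coordinate-sum functions are orbit invariant. -/
lemma orbitInvariant_sum_coords (g : Fin r → ℝ) :
    OrbitInvariant (fun i : Cell r T => ∑ s, g (i s)) := by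
  intro i j hj
  obtain ⟨σ, rfl⟩ := mem_orbit_iff.1 hj
  exact (Equiv.sum_comp σ (fun s => g (i s))).symm
lemma sum_margMean (π : Cell r T → ℝ) :
    ∑ s, margMean u π s = ∑ i, π i * (∑ s, u (i s)) := by
  simp only [margMean]
  rw [Finset.sum_comm]
  exact Finset.sum_congr rfl fun i _ => by rw [Finset.mul_sum]; exact Finset.sum_congr rfl fun s _ => mul_comm _ _
lemma sum_margSecond (π : Cell r T → ℝ) :
    ∑ s, margSecond u π s = ∑ i, π i * (∑ s, u (i s) ^ 2) := by
  simp only [margSecond]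
  rw [Finset.sum_comm]
  exact Finset.sum_congr rfl fun i _ => by rw [Finset.mul_sum]; exact Finset.sum_congr rfl fun s _ => mul_comm _ _
lemma sum_mixedMoment (π : Cell r T → ℝ) :
    ∑ s, ∑ t, mixedMoment u π s t = ∑ i, π i * ((∑ s, u (i s)) * (∑ s, u (i s))) := by
  simp only [mixedMoment]
  have key : ∀ i : Cell r T, π i * ((∑ s, u (i s)) * (∑ s, u (i s)))
      = ∑ s, ∑ t, u (i s) * u (i t) * π i := by
    intro i
    rw [Finset.sum_mul_sum, Finset.mul_sum]
    refine Finset.sum_congr rfl fun s _ => ?_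
    rw [Finset.mul_sum]
    exact Finset.sum_congr rfl fun t _ => by ring
  calc ∑ s, ∑ t, ∑ i : Cell r T, u (i s) * u (i t) * π i
      = ∑ s, ∑ i : Cell r T, ∑ t, u (i s) * u (i t) * π i :=
        Finset.sum_congr rfl fun s _ => Finset.sum_comm
    _ = ∑ i : Cell r T, ∑ s, ∑ t, u (i s) * u (i t) * π i := Finset.sum_comm
    _ = _ := Finset.sum_congr rfl fun i _ => (key i).symm
lemma mixedMoment_self (π : Cell r T → ℝ) (s : Fin T) :
    mixedMoment u π s s = margSecond u π s := by
  simp [mixedMoment, margSecond, sq]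
lemma margVar_eq (π : Cell r T → ℝ) (hsum : ∑ i, π i = 1) (s : Fin T) :
    margVar u π s = ∑ i, (u (i s) - margMean u π s) ^ 2 * π i := by
  have h : ∀ i : Cell r T, (u (i s) - margMean u π s) ^ 2 * π i
      = u (i s) ^ 2 * π i - 2 * margMean u π s * (u (i s) * π i)
        + (margMean u π s) ^ 2 * π i := fun i => by ring
  rw [Finset.sum_congr rfl fun i _ => h i, Finset.sum_add_distrib, Finset.sum_sub_distrib,
    ← Finset.mul_sum, ← Finset.mul_sum, hsum]
  rw [margVar, margSecond, margMean]
  ring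
lemma margVar_pos (hr : 2 ≤ r) (hu : StrictMono u) {π : Cell r T → ℝ}
    (hπ : ∀ i, 0 < π i) (hsum : ∑ i, π i = 1) (s : Fin T) :
    0 < margVar u π s := by
  rw [margVar_eq π hsum s]
  have h01 : (⟨0, by omega⟩ : Fin r) < (⟨1, by omega⟩ : Fin r) := by
    simp [Fin.lt_def]
  have hne : u ⟨0, by omega⟩ ≠ u ⟨1, by omega⟩ := ne_of_lt (hu h01)
  have hkey : ∃ a : Fin r, u a ≠ margMean u π s := by
    by_cases h : u ⟨0, by omega⟩ = margMean u π s
    · exact ⟨⟨1, by omega⟩, fun h' => hne (h.trans h'.symm)⟩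
    · exact ⟨⟨0, by omega⟩, h⟩
  obtain ⟨a, ha⟩ := hkey
  refine Finset.sum_pos' (fun i _ => mul_nonneg (sq_nonneg _) (hπ i).le) ?_
  refine ⟨fun _ => a, Finset.mem_univ _, ?_⟩
  exact mul_pos (lt_of_le_of_ne (sq_nonneg _) (Ne.symm (pow_ne_zero 2 (sub_ne_zero.2 ha)))) (hπ _)

/-- Sum of quadratic form against a weight. -/
lemma sum_quadForm_mul (α : Fin T → ℝ) (B : Matrix (Fin T) (Fin T) ℝ)
    (p : Cell r T → ℝ) :
    ∑ i, quadForm u α B i * p i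
      = ∑ s, α s * margMean u p s + ∑ s, ∑ t, B s t * mixedMoment u p s t := by
  simp only [quadForm, add_mul, Finset.sum_add_distrib, Finset.sum_mul]
  congr 1
  · rw [Finset.sum_comm]
    refine Finset.sum_congr rfl fun s _ => ?_
    rw [margMean, Finset.mul_sum]
    exact Finset.sum_congr rfl fun i _ => by ring
  · rw [Finset.sum_comm]
    refine Finset.sum_congr rfl fun s _ => ?_
    rw [Finset.sum_comm]
    refine Finset.sum_congr rfl fun t _ => ?_
    rw [mixedMoment, Finset.mul_sum]
    exact Finset.sum_congr rfl fun i _ => by ring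
lemma sum_coordSum (p : Cell r T → ℝ) (g : Fin r → ℝ) :
    ∑ s, ∑ i : Cell r T, g (i s) * p i = ∑ i, p i * (∑ s, g (i s)) := by
  rw [Finset.sum_comm]
  refine Finset.sum_congr rfl fun i _ => ?_
  rw [Finset.mul_sum]
  exact Finset.sum_congr rfl fun s _ => mul_comm _ _
lemma single_match (hT : 0 < T) (π : Cell r T → ℝ) (g : Fin r → ℝ)
    (hc : ∀ s t : Fin T, (∑ i, g (i s) * π i) = ∑ i, g (i t) * π i) (s : Fin T) :
    ∑ i, g (i s) * π i = ∑ i, g (i s) * symmz π i := by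
  have hq : ∀ s' t : Fin T, (∑ i, g (i s') * symmz π i) = ∑ i, g (i t) * symmz π i := by
    intro s' t
    have h := sum_perm_inv (symmz_permInv π) (fun i => g (i t)) (Equiv.swap s' t)
    simpa [Equiv.swap_apply_right] using h
  have h1 : ∑ t, ∑ i, g (i t) * π i = (T : ℝ) * ∑ i, g (i s) * π i := by
    rw [Finset.sum_congr rfl fun t _ => hc t s, Finset.sum_const, Finset.card_univ,
      Fintype.card_fin, nsmul_eq_mul]
  have h2 : ∑ t, ∑ i, g (i t) * symmz π i = (T : ℝ) * ∑ i, g (i s) * symmz π i := by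
    rw [Finset.sum_congr rfl fun t _ => hq t s, Finset.sum_const, Finset.card_univ,
      Fintype.card_fin, nsmul_eq_mul]
  have h3 : ∑ t, ∑ i, g (i t) * π i = ∑ t, ∑ i, g (i t) * symmz π i := by
    rw [sum_coordSum π g, sum_coordSum (symmz π) g]
    exact (sum_symmz_mul π _ (orbitInvariant_sum_coords g)).symm
  have hT' : (T : ℝ) ≠ 0 := Nat.cast_ne_zero.2 hT.ne'
  exact mul_left_cancel₀ hT' (h1.symm.trans (h3.trans h2))
lemma total_mixed (p : Cell r T → ℝ) (c : ℝ)
    (hc : ∀ s' t' : Fin T, s' ≠ t' → mixedMoment u p s' t' = c) :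
    ∑ s', ∑ t', mixedMoment u p s' t'
      = (∑ s', margSecond u p s') + ((T * (T - 1) : ℕ) : ℝ) * c := by
  have row : ∀ s' : Fin T, ∑ t', mixedMoment u p s' t'
      = margSecond u p s' + ((T - 1 : ℕ) : ℝ) * c := by
    intro s'
    rw [← Finset.add_sum_erase _ _ (Finset.mem_univ s'), mixedMoment_self]
    congr 1
    rw [Finset.sum_congr rfl fun t' ht' => hc s' t' (Ne.symm (Finset.ne_of_mem_erase ht')),
      Finset.sum_const, nsmul_eq_mul, Finset.card_erase_of_mem (Finset.mem_univ _),
      Finset.card_univ, Fintype.card_fin]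
  rw [Finset.sum_congr rfl fun s' _ => row s', Finset.sum_add_distrib, Finset.sum_const,
    Finset.card_univ, Fintype.card_fin, nsmul_eq_mul, Nat.cast_mul, mul_assoc]
lemma orbitInvariant_prod (u : Fin r → ℝ) :
    OrbitInvariant (fun i : Cell r T => (∑ s, u (i s)) * (∑ s, u (i s))) := by
  intro i j hj
  have h := orbitInvariant_sum_coords (T := T) u i j hj
  simp only at h ⊢
  rw [h]
lemma mixed_match (hT : 3 ≤ T) (π : Cell r T → ℝ)
    (m2 : ∀ s, margSecond u π s = margSecond u (symmz π) s)
    {s t : Fin T} (hst : s ≠ t)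
    (hcπ : ∀ s' t' : Fin T, s' ≠ t' → mixedMoment u π s' t' = mixedMoment u π s t) :
    mixedMoment u π s t = mixedMoment u (symmz π) s t := by
  have hcq : ∀ s' t' : Fin T, s' ≠ t' →
      mixedMoment u (symmz π) s' t' = mixedMoment u (symmz π) s t :=
    fun s' t' h => mixedMoment_eq_of_permInv (symmz_permInv π) h hst
  have t1 := total_mixed (u := u) π _ hcπ
  have t2 := total_mixed (u := u) (symmz π) _ hcq
  have tot : ∑ s', ∑ t', mixedMoment u π s' t'
      = ∑ s', ∑ t', mixedMoment u (symmz π) s' t' := by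
    rw [sum_mixedMoment, sum_mixedMoment]
    exact (sum_symmz_mul π _ (orbitInvariant_prod u)).symm
  have m2sum : ∑ s', margSecond u π s' = ∑ s', margSecond u (symmz π) s' :=
    Finset.sum_congr rfl fun s' _ => m2 s'
  have hcoef : ((T * (T - 1) : ℕ) : ℝ) ≠ 0 := by
    have h0 : T * (T - 1) ≠ 0 := Nat.mul_ne_zero (by omega) (by omega)
    exact_mod_cast h0
  refine mul_left_cancel₀ hcoef ?_
  have := tot
  rw [t1, t2] at this
  linarith [this, m2sum]
lemma sign_lemma {F : ℝ → ℝ} (hF : StrictMonoOn F (Set.Ioi 0)) {p q : ℝ}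
    (hp : 0 < p) (hq : 0 < q) :
    0 ≤ (p - q) * (F (p / q) - F 1) ∧ ((p - q) * (F (p / q) - F 1) = 0 → p = q) := by
  rcases lt_trichotomy p q with h | h | h
  · have hlt : F (p / q) < F 1 :=
      hF (Set.mem_Ioi.2 (div_pos hp hq)) (Set.mem_Ioi.2 one_pos) ((div_lt_one hq).2 h)
    have hpos : 0 < (p - q) * (F (p / q) - F 1) :=
      mul_pos_of_neg_of_neg (by linarith) (by linarith)
    exact ⟨hpos.le, fun h0 => absurd h0.symm hpos.ne⟩
  · refine ⟨?_, fun _ => h⟩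
    rw [h, sub_self, zero_mul]
  · have hlt : F 1 < F (p / q) :=
      hF (Set.mem_Ioi.2 one_pos) (Set.mem_Ioi.2 (div_pos hp hq)) ((one_lt_div hq).2 h)
    have hpos : 0 < (p - q) * (F (p / q) - F 1) :=
      mul_pos (by linarith) (by linarith)
    exact ⟨hpos.le, fun h0 => absurd h0.symm hpos.ne⟩

/-- Theorem 2 and Corollary 1: for `T ≥ 3`, the S model holds iff
both the GS[f] and ME₂ models hold; equivalently, iff GS[f], ME, VE and CE all hold. -/
theorem stmt2 (r T : ℕ) (hr : 2 ≤ r) (hT : 3 ≤ T)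
    (u : Fin r → ℝ) (hu : StrictMono u)
    (f F : ℝ → ℝ) (hf1 : f 1 = 0)
    (hconv : StrictConvexOn ℝ (Set.Ioi 0) f)
    (hderiv : ∀ x ∈ Set.Ioi (0 : ℝ), HasDerivAt f (F x) x)
    (hF2 : ∀ x ∈ Set.Ioi (0 : ℝ), DifferentiableAt ℝ F x)
    (π : Cell r T → ℝ) (hπ : ∀ i, 0 < π i) (hsum : ∑ i, π i = 1) :
    (CompletelySymmetric π ↔ IsGSf u F π ∧ ME2model u π) ∧
    (CompletelySymmetric π ↔
      IsGSf u F π ∧ MEmodel u π ∧ VEmodel u π ∧ CEmodel u π) := by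
  have hT0 : 0 < T := by omega
  have hFmono : StrictMonoOn F (Set.Ioi 0) := by
    have h := hconv.strictMonoOn_deriv (fun x hx => (hderiv x hx).differentiableAt)
    intro x hx y hy hxy
    have ex := (hderiv x hx).deriv
    have ey := (hderiv y hy).deriv
    rw [← ex, ← ey]
    exact h hx hy hxy
  have main : CompletelySymmetric π ↔ IsGSf u F π ∧ ME2model u π := by
    constructor
    · intro hS
      have hPI : PermInv π := completelySymmetric_permInv hS
      have hq : ∀ i, symmz π i = π i := fun i => by
        rw [symmz, Finset.sum_congr rfl fun j hj => (hS i j hj).symm, Finset.sum_const,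
          nsmul_eq_mul]
        exact mul_div_cancel_left₀ _ (ne_of_gt (card_orbit_pos i))
      have hv : ∀ a b : Fin T, margVar u π a = margVar u π b := fun a b => by
        rw [margVar, margVar, margMean_eq_of_permInv hPI a b, margSecond_eq_of_permInv hPI a b]
      refine ⟨⟨0, 0, fun _ => F 1, ?_, fun i j _ => rfl, ?_⟩, ?_, ?_, ?_⟩
      · simp [Matrix.IsSymm]
      · intro i
        rw [hq i, div_self (hπ i).ne']
        simp [quadForm]
      · exact fun s t => margMean_eq_of_permInv hPI s t
      · exact hv
      · intro s t s' t' hst h'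
        rw [margCorr, margCorr, mixedMoment_eq_of_permInv hPI hst h',
          margMean_eq_of_permInv hPI s s', margMean_eq_of_permInv hPI t t',
          hv s s', hv t t']
    · rintro ⟨⟨α, B, γ, hB, hγ, hGS⟩, hME, hVE, hCE⟩
      have hvarpos : ∀ s, 0 < margVar u π s := margVar_pos hr hu hπ hsum
      have hm2c : ∀ s t : Fin T, margSecond u π s = margSecond u π t := by
        intro s t
        have h1 := hME s t
        have h2 := hVE s t
        rw [margVar, margVar, h1] at h2
        linarith
      have hmean : ∀ s, margMean u π s = margMean u (symmz π) s :=
        fun s => single_match hT0 π u hME s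
      have hsec : ∀ s, margSecond u π s = margSecond u (symmz π) s :=
        fun s => single_match hT0 π (fun a => u a ^ 2) hm2c s
      have hmixc : ∀ s' t' s t : Fin T, s' ≠ t' → s ≠ t →
          mixedMoment u π s' t' = mixedMoment u π s t := by
        intro s' t' s t h1 h2
        have key : ∀ a b : Fin T, a ≠ b → mixedMoment u π a b
            = margCorr u π a b * (Real.sqrt (margVar u π a) * Real.sqrt (margVar u π b))
              + margMean u π a * margMean u π b := by
          intro a b hab
          rw [margCorr, div_mul_cancel₀]
          · ring
          · have ha := Real.sqrt_pos.2 (hvarpos a)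
            have hb := Real.sqrt_pos.2 (hvarpos b)
            positivity
        rw [key _ _ h1, key _ _ h2, hCE s' t' s t h1 h2, hME s' s, hME t' t,
          hVE s' s, hVE t' t]
      have hmix : ∀ s t : Fin T, mixedMoment u π s t = mixedMoment u (symmz π) s t := by
        intro s t
        by_cases hst : s = t
        · subst hst
          rw [mixedMoment_self, mixedMoment_self]
          exact hsec s
        · exact mixed_match hT π hsec hst (fun s' t' h => hmixc s' t' s t h hst)
      have hzero : ∑ i, (π i - symmz π i) * (F (π i / symmz π i) - F 1) = 0 := by
        have e1 : ∀ i, (π i - symmz π i) * (F (π i / symmz π i) - F 1)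
            = quadForm u α B i * π i - quadForm u α B i * symmz π i
              + (π i - symmz π i) * (γ i - F 1) := by
          intro i
          rw [hGS i]
          ring
        rw [Finset.sum_congr rfl fun i _ => e1 i, Finset.sum_add_distrib,
          Finset.sum_sub_distrib]
        have hγ' : OrbitInvariant (fun i => γ i - F 1) := fun i j hj => by
          simp only
          rw [hγ i j hj]
        have hz1 : ∑ i, (π i - symmz π i) * (γ i - F 1) = 0 := sum_sub_symmz_mul π _ hγ'
        have hz2 : ∑ i, quadForm u α B i * π i = ∑ i, quadForm u α B i * symmz π i := by
          rw [sum_quadForm_mul, sum_quadForm_mul]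
          congr 1
          · exact Finset.sum_congr rfl fun s _ => by rw [hmean s]
          · exact Finset.sum_congr rfl fun s _ => Finset.sum_congr rfl fun t _ => by
              rw [hmix s t]
        rw [hz1, hz2]
        ring
      have hterm : ∀ i ∈ Finset.univ, (0:ℝ) ≤ (π i - symmz π i) * (F (π i / symmz π i) - F 1) :=
        fun i _ => (sign_lemma hFmono (hπ i) (symmz_pos π hπ i)).1
      have hall := (Finset.sum_eq_zero_iff_of_nonneg hterm).1 hzero
      have hpq : ∀ i, π i = symmz π i := fun i =>
        (sign_lemma hFmono (hπ i) (symmz_pos π hπ i)).2 (hall i (Finset.mem_univ i))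
      intro i j hj
      rw [hpq i, hpq j]
      exact (symmz_eq_of_mem π hj).symm
  exact ⟨main, main⟩


end GSf
end

section
/- Suppose a positive probability distribution π on I_V satisfies π_i = π^S_i · ( ũ_i + γ_i + 1 ) for all cells i, for some α ∈ ℝ^T, symmetric B, and orbit-invariant γ (this is the GS[f] model with f(x) = (x−1)²/2, i.e., Pearson's χ² divergence, called the PGS model). Set θ_i := ũ_i / |D(i)|. Then for every cell i: π^c_i = 1/|D(i)| + θ_i − (1/|D(i)|) Σ_{j∈D(i)} θ_j, and for every j ∈ D(i): π^c_i − π^c_j = θ_i − θ_j. -/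
open Finset

namespace GSf

variable {r T : ℕ}

lemma orbit_card_pos (i : Cell r T) : 0 < (orbit i).card :=
  Finset.card_pos.mpr ⟨i, mem_orbit_self i⟩

/-- the PGS model, Pearson χ² case: conditional-probability
representation and difference relations with potential parameters `θ_i = ũ_i/|D(i)|`. -/
theorem stmt8 (r T : ℕ) (hr : 2 ≤ r) (hT : 2 ≤ T)
    (u : Fin r → ℝ) (hu : StrictMono u)
    (π : Cell r T → ℝ) (hπ : ∀ i, 0 < π i) (hsum : ∑ i, π i = 1)
    (α : Fin T → ℝ) (B : Matrix (Fin T) (Fin T) ℝ) (hB : B.IsSymm)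
    (γ : Cell r T → ℝ) (hγ : OrbitInvariant γ)
    (hmodel : ∀ i, π i = symmz π i * (quadForm u α B i + γ i + 1)) :
    ∀ i, (condProb π i =
        ((orbit i).card : ℝ)⁻¹ + quadForm u α B i / ((orbit i).card : ℝ) -
          ((orbit i).card : ℝ)⁻¹ *
            ∑ j ∈ orbit i, quadForm u α B j / ((orbit j).card : ℝ)) ∧
      ∀ j ∈ orbit i,
        condProb π i - condProb π j =
          quadForm u α B i / ((orbit i).card : ℝ) -
            quadForm u α B j / ((orbit j).card : ℝ) := by
  intro i
  have hn : (0:ℝ) < ((orbit i).card : ℝ) := by exact_mod_cast orbit_card_pos i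
  have hS : (0:ℝ) < ∑ j ∈ orbit i, π j :=
    Finset.sum_pos (fun j _ => hπ j) ⟨i, mem_orbit_self i⟩
  set n : ℝ := ((orbit i).card : ℝ) with hn_def
  set S : ℝ := ∑ j ∈ orbit i, π j with hS_def
  set Q : ℝ := ∑ j ∈ orbit i, quadForm u α B j with hQ_def
  have hsymm : ∀ j ∈ orbit i, symmz π j = S / n := by
    intro j hj
    simp only [symmz, orbit_eq_of_mem hj, ← hS_def, ← hn_def]
  have hγi : ∀ j ∈ orbit i, γ j = γ i := fun j hj => (hγ i j hj).symm
  have hsumq : S = S / n * (Q + n * γ i + n) := by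
    calc S = ∑ j ∈ orbit i, S / n * (quadForm u α B j + γ i + 1) := by
          rw [hS_def]
          refine Finset.sum_congr rfl fun j hj => ?_
          rw [hmodel j, hsymm j hj, hγi j hj]
      _ = S / n * (Q + n * γ i + n) := by
          rw [← Finset.mul_sum]
          congr 1
          rw [Finset.sum_add_distrib, Finset.sum_add_distrib, Finset.sum_const,
            Finset.sum_const, nsmul_eq_mul, nsmul_eq_mul, ← hQ_def, ← hn_def]
          ring
  have hX : Q + n * γ i = 0 := by
    field_simp at hsumq
    linarith
  have hcond : ∀ j ∈ orbit i, condProb π j = (quadForm u α B j + γ i + 1) / n := by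
    intro j hj
    have : condProb π j = π j / S := by
      simp only [condProb, orbit_eq_of_mem hj, ← hS_def]
    rw [this, hmodel j, hsymm j hj, hγi j hj]
    field_simp
  have hcardj : ∀ j ∈ orbit i, ((orbit j).card : ℝ) = n := by
    intro j hj; rw [orbit_eq_of_mem hj, ← hn_def]
  constructor
  · rw [hcond i (mem_orbit_self i)]
    have : ∑ j ∈ orbit i, quadForm u α B j / ((orbit j).card : ℝ) = Q / n := by
      rw [hQ_def, Finset.sum_div]
      exact Finset.sum_congr rfl fun j hj => by rw [hcardj j hj]
    rw [this]
    have hγval : γ i = -(Q / n) := by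
      field_simp; linarith [hX]
    rw [hγval]
    ring
  · intro j hj
    rw [hcond i (mem_orbit_self i), hcond j hj, hcardj j hj]
    ring

end GSf
end

section
/- Suppose a positive probability distribution π on I_V satisfies, for all cells i, ũ_i + γ_i < 2 and π_i = π^S_i · ( 1 − (ũ_i + γ_i)/2 )^{−2}, for some α ∈ ℝ^T, symmetric B, and orbit-invariant γ (this is the GS[f] model with f(x) = 2(√x − 1)², i.e., the Hellinger distance, called the HGS model). Set θ_i := −(1/2)·√|D(i)|·ũ_i. Then for every cell i and every j ∈ D(i): (π^c_i)^{−1/2} − (π^c_j)^{−1/2} = θ_i − θ_j. -/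
open Finset

namespace GSf

variable {r T : ℕ}

lemma key (u : Fin r → ℝ)
    (π : Cell r T → ℝ) (hπ : ∀ i, 0 < π i)
    (α : Fin T → ℝ) (B : Matrix (Fin T) (Fin T) ℝ)
    (γ : Cell r T → ℝ)
    (hlt : ∀ i, quadForm u α B i + γ i < 2)
    (hmodel : ∀ i, π i =
      symmz π i * (1 - (quadForm u α B i + γ i) / 2) ^ (-2 : ℤ))
    (k : Cell r T) :
    condProb π k ^ (-(1 / 2 : ℝ)) =
      Real.sqrt ((orbit k).card) * (1 - (quadForm u α B k + γ k) / 2) := by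
  set S := ∑ j ∈ orbit k, π j with hS
  have hSpos : 0 < S := Finset.sum_pos (fun j _ => hπ j) ⟨k, mem_orbit_self k⟩
  have hcpos : (0 : ℝ) < (orbit k).card := by
    exact_mod_cast Finset.card_pos.2 ⟨k, mem_orbit_self k⟩
  set x := quadForm u α B k + γ k with hx
  have hxpos : 0 < 1 - x / 2 := by have := hlt k; linarith
  have hSne : S ≠ 0 := hSpos.ne'
  have hcne : ((orbit k).card : ℝ) ≠ 0 := hcpos.ne'
  have hwne : ((1 - x / 2) ^ 2 : ℝ) ≠ 0 := pow_ne_zero _ hxpos.ne'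
  have hcond : condProb π k = (((orbit k).card : ℝ) * (1 - x / 2) ^ 2)⁻¹ := by
    refine eq_inv_of_mul_eq_one_right ?_
    rw [condProb, ← hS, hmodel k, symmz, ← hS, ← hx, zpow_neg,
      show ((2:ℤ) = (2:ℕ)) from rfl, zpow_natCast]
    have h2x : (2:ℝ) - x ≠ 0 := by linarith
    field_simp
  rw [hcond]
  have hbpos : 0 < ((orbit k).card : ℝ) * (1 - x / 2) ^ 2 :=
    mul_pos hcpos (pow_pos hxpos 2)
  rw [Real.inv_rpow hbpos.le, Real.rpow_neg hbpos.le, inv_inv,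
      ← Real.sqrt_eq_rpow, Real.sqrt_mul hcpos.le, Real.sqrt_sq hxpos.le]

/-- the HGS model, Hellinger case: the relation
`(π^c_i)^{-1/2} - (π^c_j)^{-1/2} = θ_i - θ_j` with `θ_i = -(1/2)√|D(i)| ũ_i`. -/
theorem stmt9 (r T : ℕ) (hr : 2 ≤ r) (hT : 2 ≤ T)
    (u : Fin r → ℝ) (hu : StrictMono u)
    (π : Cell r T → ℝ) (hπ : ∀ i, 0 < π i) (hsum : ∑ i, π i = 1)
    (α : Fin T → ℝ) (B : Matrix (Fin T) (Fin T) ℝ) (hB : B.IsSymm)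
    (γ : Cell r T → ℝ) (hγ : OrbitInvariant γ)
    (hlt : ∀ i, quadForm u α B i + γ i < 2)
    (hmodel : ∀ i, π i =
      symmz π i * (1 - (quadForm u α B i + γ i) / 2) ^ (-2 : ℤ)) :
    ∀ i, ∀ j ∈ orbit i,
      condProb π i ^ (-(1 / 2 : ℝ)) - condProb π j ^ (-(1 / 2 : ℝ)) =
        (-(1 / 2 : ℝ) * Real.sqrt ((orbit i).card) * quadForm u α B i) -
          (-(1 / 2 : ℝ) * Real.sqrt ((orbit j).card) * quadForm u α B j) := by
  intro i j hj
  have hoe : orbit j = orbit i := orbit_eq_of_mem hj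
  have hγij : γ i = γ j := hγ i j hj
  rw [key u π hπ α B γ hlt hmodel i, key u π hπ α B γ hlt hmodel j, hoe, hγij]
  ring

end GSf
end

section
/- Let p and q be positive probability vectors on a finite nonempty index set S, and for λ ∉ {−1, 0} define the power divergence D_λ(p‖q) := (1/(λ(λ+1))) Σ_{i∈S} p_i [ (p_i/q_i)^λ − 1 ]. Then lim_{λ→0} D_λ(p‖q) = D_KL(p‖q) and lim_{λ→−1} D_λ(p‖q) = D_KL(q‖p), where D_KL(p‖q) := Σ_{i∈S} p_i log(p_i/q_i). (Continuity of the power-divergence family at λ = 0 and λ = −1.) -/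
open Finset

namespace GSf

variable {r T : ℕ}

/-- continuity of the Cressie–Read power-divergence family at
`λ = 0` (KL-divergence) and `λ = -1` (reverse KL-divergence). -/
theorem stmt11 (S : Type*) [Fintype S] [Nonempty S]
    (p q : S → ℝ) (hp : ∀ i, 0 < p i) (hq : ∀ i, 0 < q i)
    (hps : ∑ i, p i = 1) (hqs : ∑ i, q i = 1) :
    Filter.Tendsto
      (fun lam : ℝ => (1 / (lam * (lam + 1))) * ∑ i, p i * ((p i / q i) ^ lam - 1))
      (nhdsWithin 0 ({0, -1} : Set ℝ)ᶜ)
      (nhds (∑ i, p i * Real.log (p i / q i))) ∧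
    Filter.Tendsto
      (fun lam : ℝ => (1 / (lam * (lam + 1))) * ∑ i, p i * ((p i / q i) ^ lam - 1))
      (nhdsWithin (-1) ({0, -1} : Set ℝ)ᶜ)
      (nhds (∑ i, q i * Real.log (q i / p i))) := by
  set x : S → ℝ := fun i => p i / q i with hx
  have hxpos : ∀ i, 0 < x i := fun i => div_pos (hp i) (hq i)
  set f : ℝ → ℝ := fun lam => ∑ i, p i * ((x i) ^ lam - 1) with hf
  have hderiv : ∀ a : ℝ, HasDerivAt f (∑ i, p i * ((x i) ^ a * Real.log (x i))) a := by
    intro a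
    have h : ∀ i ∈ Finset.univ (α := S), HasDerivAt (fun lam : ℝ => p i * ((x i) ^ lam - 1))
        (p i * ((x i) ^ a * Real.log (x i))) a := by
      intro i _
      exact (((Real.hasStrictDerivAt_const_rpow (hxpos i) a).hasDerivAt).sub_const 1).const_mul (p i)
    simpa [hf] using HasDerivAt.fun_sum h
  have hf0 : f 0 = 0 := by simp [hf]
  have hfm1 : f (-1) = 0 := by
    have h1 : f (-1) = ∑ i, (q i - p i) := by
      apply Finset.sum_congr rfl
      intro i _
      have hxi : (x i) ^ (-1 : ℝ) = q i / p i := by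
        rw [Real.rpow_neg_one, hx]
        exact inv_div (p i) (q i)
      rw [hxi]
      field_simp [(hp i).ne']
    rw [h1, Finset.sum_sub_distrib, hps, hqs, sub_self]
  have hsub0 : (({0, -1} : Set ℝ)ᶜ : Set ℝ) ⊆ ({(0:ℝ)}ᶜ : Set ℝ) := by
    intro y hy
    simp only [Set.mem_compl_iff, Set.mem_insert_iff, Set.mem_singleton_iff] at hy ⊢
    tauto
  have hsub1 : (({0, -1} : Set ℝ)ᶜ : Set ℝ) ⊆ ({(-1:ℝ)}ᶜ : Set ℝ) := by
    intro y hy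
    simp only [Set.mem_compl_iff, Set.mem_insert_iff, Set.mem_singleton_iff] at hy ⊢
    tauto
  constructor
  · -- limit at 0
    have hslope : Filter.Tendsto (slope f 0) (nhdsWithin 0 ({(0:ℝ)}ᶜ))
        (nhds (∑ i, p i * ((x i) ^ (0:ℝ) * Real.log (x i)))) :=
      hasDerivAt_iff_tendsto_slope.mp (hderiv 0)
    have hslope' := hslope.mono_left (nhdsWithin_mono 0 hsub0)
    have haux : Filter.Tendsto (fun lam : ℝ => 1 / (lam + 1))
        (nhdsWithin 0 (({0, -1} : Set ℝ)ᶜ)) (nhds 1) := by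
      have hc : ContinuousAt (fun lam : ℝ => 1 / (lam + 1)) 0 :=
        ContinuousAt.div continuousAt_const (by fun_prop) (by norm_num)
      have := hc.tendsto.mono_left (nhdsWithin_le_nhds (s := (({0, -1} : Set ℝ)ᶜ : Set ℝ)))
      simpa using this
    have hmul := hslope'.mul haux
    have heq : ∀ᶠ lam in nhdsWithin 0 (({0, -1} : Set ℝ)ᶜ),
        slope f 0 lam * (1 / (lam + 1)) =
        (1 / (lam * (lam + 1))) * ∑ i, p i * ((x i) ^ lam - 1) := by
      filter_upwards [self_mem_nhdsWithin] with lam hlam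
      simp only [Set.mem_compl_iff, Set.mem_insert_iff, Set.mem_singleton_iff] at hlam
      push_neg at hlam
      have h0 : lam ≠ 0 := hlam.1
      have h1 : lam + 1 ≠ 0 := by
        intro h; apply hlam.2; linarith
      show slope f 0 lam * (1 / (lam + 1)) = (1 / (lam * (lam + 1))) * f lam
      rw [slope_def_field, hf0, sub_zero, sub_zero]
      simp only [one_div]
      rw [mul_inv]
      ring
    have := hmul.congr' heq
    simp only [Real.rpow_zero, one_mul, mul_one] at this
    exact this
  · -- limit at -1
    have hslope : Filter.Tendsto (slope f (-1)) (nhdsWithin (-1) ({(-1:ℝ)}ᶜ))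
        (nhds (∑ i, p i * ((x i) ^ (-1:ℝ) * Real.log (x i)))) :=
      hasDerivAt_iff_tendsto_slope.mp (hderiv (-1))
    have hslope' := hslope.mono_left (nhdsWithin_mono (-1) hsub1)
    have haux : Filter.Tendsto (fun lam : ℝ => 1 / lam)
        (nhdsWithin (-1) (({0, -1} : Set ℝ)ᶜ)) (nhds (-1)) := by
      have hc : ContinuousAt (fun lam : ℝ => 1 / lam) (-1) :=
        ContinuousAt.div continuousAt_const continuousAt_id (by norm_num)
      have := hc.tendsto.mono_left (nhdsWithin_le_nhds (s := (({0, -1} : Set ℝ)ᶜ : Set ℝ)))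
      simpa using this
    have hmul := hslope'.mul haux
    have heq : ∀ᶠ lam in nhdsWithin (-1) (({0, -1} : Set ℝ)ᶜ),
        slope f (-1) lam * (1 / lam) =
        (1 / (lam * (lam + 1))) * ∑ i, p i * ((x i) ^ lam - 1) := by
      filter_upwards [self_mem_nhdsWithin] with lam hlam
      simp only [Set.mem_compl_iff, Set.mem_insert_iff, Set.mem_singleton_iff] at hlam
      push_neg at hlam
      have h0 : lam ≠ 0 := hlam.1
      have h1 : lam + 1 ≠ 0 := by
        intro h; apply hlam.2; linarith
      show slope f (-1) lam * (1 / lam) = (1 / (lam * (lam + 1))) * f lam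
      rw [slope_def_field, hfm1, sub_zero, sub_neg_eq_add]
      simp only [one_div]
      rw [mul_inv]
      ring
    have hfinal := hmul.congr' heq
    have hval : (∑ i, p i * ((x i) ^ (-1:ℝ) * Real.log (x i))) * (-1)
        = ∑ i, q i * Real.log (q i / p i) := by
      rw [mul_neg_one, ← Finset.sum_neg_distrib]
      apply Finset.sum_congr rfl
      intro i _
      have hxi : (x i) ^ (-1 : ℝ) = q i / p i := by
        rw [Real.rpow_neg_one, hx]
        exact inv_div (p i) (q i)
      rw [hxi]
      simp only [hx]
      rw [Real.log_div (hp i).ne' (hq i).ne', Real.log_div (hq i).ne' (hp i).ne']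
      field_simp [(hp i).ne']
      ring
    rw [hval] at hfinal
    exact hfinal

end GSf
end

section
/- Let π be a positive probability distribution on I_V satisfying the GS[f] model, and suppose the moment equalities hold: Σ_{i∈I_V} u_{i_s} π_i is the same for all s ∈ {1,…,T}, Σ_{i∈I_V} u_{i_s}² π_i is the same for all s, and Σ_{i∈I_V} u_{i_s} u_{i_t} π_i is the same for all pairs s ≠ t (the ME₂ constraints in moment form). Then for every permutation σ of {1,…,T}: Σ_{i∈I_V} π_i [ F(π_i/π^S_i) − F(π_{i·σ}/π^S_i) ] = 0, where i·σ := (i_{σ(1)},…,i_{σ(T)}) (note π^S_{i·σ} = π^S_i). (Key orthogonality identity in the proof of Theorem 2.) -/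
open Finset

namespace GSf

variable {r T : ℕ}

lemma mem_orbit_comp (i : Cell r T) (σ : Equiv.Perm (Fin T)) : (i ∘ σ) ∈ orbit i := by
  simp only [orbit, Finset.mem_filter, Finset.mem_univ, true_and]
  exact ⟨σ, rfl⟩

lemma orbit_comp (i : Cell r T) (σ : Equiv.Perm (Fin T)) : orbit (i ∘ σ) = orbit i := by
  ext j
  simp only [orbit, Finset.mem_filter, Finset.mem_univ, true_and]
  constructor
  · rintro ⟨τ, rfl⟩; exact ⟨(τ.trans σ), by ext x; simp [Equiv.trans]⟩
  · rintro ⟨τ, rfl⟩; exact ⟨(τ.trans σ.symm), by ext x; simp [Equiv.trans]⟩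

lemma symmz_comp (π : Cell r T → ℝ) (i : Cell r T) (σ : Equiv.Perm (Fin T)) :
    symmz π (i ∘ σ) = symmz π i := by
  unfold symmz; rw [orbit_comp]

lemma sum_pi_quad (u : Fin r → ℝ) (π : Cell r T → ℝ) (α : Fin T → ℝ)
    (B : Matrix (Fin T) (Fin T) ℝ) (σ : Equiv.Perm (Fin T)) :
    ∑ i, π i * quadForm u α B (i ∘ σ) =
      (∑ s, α s * margMean u π (σ s)) +
        ∑ s, ∑ t, B s t * mixedMoment u π (σ s) (σ t) := by
  unfold quadForm
  simp only [Function.comp_apply, mul_add]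
  rw [Finset.sum_add_distrib]
  congr 1
  · simp_rw [Finset.mul_sum]
    rw [Finset.sum_comm]
    refine Finset.sum_congr rfl fun s _ => ?_
    unfold margMean
    rw [Finset.mul_sum]
    exact Finset.sum_congr rfl fun i _ => by ring
  · simp_rw [Finset.mul_sum]
    rw [Finset.sum_comm]
    refine Finset.sum_congr rfl fun s _ => ?_
    rw [Finset.sum_comm]
    refine Finset.sum_congr rfl fun t _ => ?_
    unfold mixedMoment
    rw [Finset.mul_sum]
    exact Finset.sum_congr rfl fun i _ => by ring

/-- key orthogonality identity in the proof of Theorem 2: under the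
GS[f] model and the second-order moment equalities, for every permutation `σ` the
weighted sum of `F`-differences over permuted cells vanishes. -/
theorem stmt13 (r T : ℕ) (hr : 2 ≤ r) (hT : 2 ≤ T)
    (u : Fin r → ℝ) (hu : StrictMono u)
    (f F : ℝ → ℝ) (hf1 : f 1 = 0)
    (hconv : StrictConvexOn ℝ (Set.Ioi 0) f)
    (hderiv : ∀ x ∈ Set.Ioi (0 : ℝ), HasDerivAt f (F x) x)
    (hF2 : ∀ x ∈ Set.Ioi (0 : ℝ), DifferentiableAt ℝ F x)
    (π : Cell r T → ℝ) (hπ : ∀ i, 0 < π i) (hsum : ∑ i, π i = 1)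
    (α : Fin T → ℝ) (B : Matrix (Fin T) (Fin T) ℝ) (hB : B.IsSymm)
    (γ : Cell r T → ℝ) (hγ : OrbitInvariant γ)
    (hGS : ∀ i, F (π i / symmz π i) = quadForm u α B i + γ i)
    (hME : ∀ s t, margMean u π s = margMean u π t)
    (hM2 : ∀ s t, margSecond u π s = margSecond u π t)
    (hMix : ∀ s t s' t' : Fin T, s ≠ t → s' ≠ t' →
      mixedMoment u π s t = mixedMoment u π s' t') :
    ∀ σ : Equiv.Perm (Fin T),
      ∑ i, π i * (F (π i / symmz π i) - F (π (i ∘ σ) / symmz π i)) = 0 := by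
  intro σ
  have key : ∀ i, F (π (i ∘ σ) / symmz π i) = quadForm u α B (i ∘ σ) + γ i := by
    intro i
    rw [← symmz_comp π i σ, hGS (i ∘ σ), hγ i (i ∘ σ) (mem_orbit_comp i σ)]
  simp only [hGS, key]
  have hsplit : ∀ i : Cell r T,
      π i * (quadForm u α B i + γ i - (quadForm u α B (i ∘ σ) + γ i)) =
        π i * quadForm u α B i - π i * quadForm u α B (i ∘ σ) := fun i => by ring
  simp_rw [hsplit]
  rw [Finset.sum_sub_distrib]
  have e1 := sum_pi_quad u π α B 1
  simp only [Equiv.Perm.coe_one, Function.comp_id, Equiv.Perm.one_apply] at e1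
  rw [e1, sum_pi_quad u π α B σ]
  have hμ : ∀ s, margMean u π (σ s) = margMean u π s := fun s => hME _ _
  have hMself : ∀ s, mixedMoment u π s s = margSecond u π s := by
    intro s
    unfold mixedMoment margSecond
    exact Finset.sum_congr rfl fun i _ => by ring
  have hM : ∀ s t, mixedMoment u π (σ s) (σ t) = mixedMoment u π s t := by
    intro s t
    by_cases h : s = t
    · subst h; rw [hMself, hMself]; exact hM2 _ _
    · exact hMix _ _ _ _ (fun hc => h (σ.injective hc)) h
  simp_rw [hμ, hM]
  exact sub_self _

end GSf
end

section
/- Let F : (0,∞) → ℝ be strictly increasing and let π be a positive probability distribution on I_V. Suppose that for every permutation σ of {1,…,T}: Σ_{i∈I_V} π_i [ F(π_i/π^S_i) − F(π_{i·σ}/π^S_i) ] = 0, where i·σ := (i_{σ(1)},…,i_{σ(T)}) (note π^S_{i·σ} = π^S_i). Then π is completely symmetric: π_i = π_j for every cell i and every j ∈ D(i). (The induction proposition in the proof of Theorem 2.) -/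
open Finset

namespace GSf

variable {r T : ℕ}

/-- induction proposition in the proof of Theorem 2: if `F` is
strictly increasing on `(0,∞)` and all the permuted `F`-difference sums vanish, then
`π` is completely symmetric. -/
theorem stmt14 (r T : ℕ) (hr : 2 ≤ r) (hT : 2 ≤ T)
    (F : ℝ → ℝ) (hF : StrictMonoOn F (Set.Ioi 0))
    (π : Cell r T → ℝ) (hπ : ∀ i, 0 < π i) (hsum : ∑ i, π i = 1)
    (h : ∀ σ : Equiv.Perm (Fin T),
      ∑ i, π i * (F (π i / symmz π i) - F (π (i ∘ σ) / symmz π i)) = 0) :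
    ∀ i, ∀ j ∈ orbit i, π i = π j := by
  classical
  -- orbit is invariant under precomposition
  have horb : ∀ (i : Cell r T) (σ : Equiv.Perm (Fin T)), orbit (i ∘ σ) = orbit i := by
    intro i σ
    ext j
    simp only [orbit, Finset.mem_filter, Finset.mem_univ, true_and]
    constructor
    · rintro ⟨τ, rfl⟩
      exact ⟨τ.trans σ, rfl⟩
    · rintro ⟨τ, rfl⟩
      refine ⟨(τ.trans σ.symm), ?_⟩
      ext t
      simp
  have hsymmz : ∀ (i : Cell r T) (σ : Equiv.Perm (Fin T)), symmz π (i ∘ σ) = symmz π i := by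
    intro i σ; unfold symmz; rw [horb]
  -- symmz is positive
  have hmem : ∀ i : Cell r T, i ∈ orbit i := by
    intro i
    simp only [orbit, Finset.mem_filter, Finset.mem_univ, true_and]
    exact ⟨1, by ext t; simp⟩
  have hsymmzpos : ∀ i : Cell r T, 0 < symmz π i := by
    intro i
    have hne : (orbit i).Nonempty := ⟨i, hmem i⟩
    have h1 : 0 < ∑ j ∈ orbit i, π j := Finset.sum_pos (fun j _ => hπ j) hne
    have h2 : (0 : ℝ) < (orbit i).card := by
      exact_mod_cast Finset.card_pos.mpr hne
    exact div_pos h1 h2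
  set g : Cell r T → ℝ := fun i => F (π i / symmz π i) with hg
  -- the hypothesis rewritten
  have hkey : ∀ σ : Equiv.Perm (Fin T), ∑ i, π i * (g i - g (i ∘ σ)) = 0 := by
    intro σ
    have := h σ
    rw [← this]
    apply Finset.sum_congr rfl
    intro i _
    simp only [hg]
    rw [hsymmz i σ]
  -- reindexing lemma
  have hreindex : ∀ (σ : Equiv.Perm (Fin T)) (f : Cell r T → ℝ),
      ∑ i : Cell r T, f (i ∘ σ) = ∑ i : Cell r T, f i := by
    intro σ f
    exact Fintype.sum_equiv (Equiv.arrowCongr σ.symm (Equiv.refl (Fin r))) _ _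
      (fun i => by rfl)
  intro i j hj
  simp only [orbit, Finset.mem_filter, Finset.mem_univ, true_and] at hj
  obtain ⟨σ, rfl⟩ := hj
  -- the symmetrized sum
  have hS : ∑ i : Cell r T, (π i - π (i ∘ σ)) * (g i - g (i ∘ σ)) = 0 := by
    have expand : ∀ i : Cell r T, (π i - π (i ∘ σ)) * (g i - g (i ∘ σ))
        = π i * (g i - g (i ∘ σ)) - π (i ∘ σ) * (g i - g (i ∘ σ)) := by
      intro i; ring
    rw [Finset.sum_congr rfl (fun i _ => expand i), Finset.sum_sub_distrib, hkey σ]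
    have h2 : ∑ i : Cell r T, π (i ∘ σ) * (g i - g (i ∘ σ)) = 0 := by
      have := hreindex σ.symm (fun i => π (i ∘ σ) * (g i - g (i ∘ σ)))
      rw [← this]
      have heq : ∀ i : Cell r T, π ((i ∘ ⇑σ.symm) ∘ ⇑σ) *
          (g (i ∘ ⇑σ.symm) - g ((i ∘ ⇑σ.symm) ∘ ⇑σ)) = -(π i * (g i - g (i ∘ ⇑σ.symm))) := by
        intro i
        have : (i ∘ ⇑σ.symm) ∘ ⇑σ = i := by ext t; simp
        rw [this]; ring
      rw [Finset.sum_congr rfl (fun i _ => heq i), Finset.sum_neg_distrib, hkey σ.symm,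
        neg_zero]
    rw [h2, sub_zero]
  -- each term is nonnegative
  have hmono : ∀ k : Cell r T, π k ≤ π (k ∘ σ) → g k ≤ g (k ∘ σ) := by
    intro k hle
    have hc := hsymmzpos k
    have h1 : π k / symmz π k ≤ π (k ∘ σ) / symmz π k := by
      exact div_le_div_of_nonneg_right hle hc.le |>.trans_eq rfl
    simp only [hg]
    rw [hsymmz k σ]
    exact hF.monotoneOn (Set.mem_Ioi.mpr (div_pos (hπ k) hc))
      (Set.mem_Ioi.mpr (div_pos (hπ (k ∘ σ)) hc)) h1
  have hnonneg : ∀ k : Cell r T, 0 ≤ (π k - π (k ∘ σ)) * (g k - g (k ∘ σ)) := by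
    intro k
    rcases le_total (π k) (π (k ∘ σ)) with hle | hle
    · nlinarith [hmono k hle]
    · -- π (k∘σ) ≤ π k : need g (k∘σ) ≤ g k
      have : g (k ∘ σ) ≤ g k := by
        have hc := hsymmzpos k
        have h1 : π (k ∘ σ) / symmz π k ≤ π k / symmz π k :=
          div_le_div_of_nonneg_right hle hc.le
        simp only [hg]
        rw [hsymmz k σ]
        exact hF.monotoneOn (Set.mem_Ioi.mpr (div_pos (hπ (k ∘ σ)) hc))
          (Set.mem_Ioi.mpr (div_pos (hπ k) hc)) h1
      exact mul_nonneg (by linarith) (by linarith)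
  -- sum of nonneg terms is zero ⇒ each term is zero
  have hzero : ∀ k ∈ (Finset.univ : Finset (Cell r T)),
      (π k - π (k ∘ σ)) * (g k - g (k ∘ σ)) = 0 :=
    (Finset.sum_eq_zero_iff_of_nonneg (fun k _ => hnonneg k)).mp hS
  have hi := hzero i (Finset.mem_univ i)
  by_contra hne
  rcases lt_or_gt_of_ne hne with hlt | hlt
  · have hc := hsymmzpos i
    have h1 : π i / symmz π i < π (i ∘ σ) / symmz π i :=
      div_lt_div_of_pos_right hlt hc
    have hg1 : g i < g (i ∘ σ) := by
      simp only [hg]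
      rw [hsymmz i σ]
      exact hF (Set.mem_Ioi.mpr (div_pos (hπ i) hc))
        (Set.mem_Ioi.mpr (div_pos (hπ (i ∘ σ)) hc)) h1
    have : (π i - π (i ∘ σ)) * (g i - g (i ∘ σ)) > 0 :=
      mul_pos_of_neg_of_neg (by linarith) (by linarith)
    linarith
  · have hc := hsymmzpos i
    have h1 : π (i ∘ σ) / symmz π i < π i / symmz π i :=
      div_lt_div_of_pos_right hlt hc
    have hg1 : g (i ∘ σ) < g i := by
      simp only [hg]
      rw [hsymmz i σ]
      exact hF (Set.mem_Ioi.mpr (div_pos (hπ (i ∘ σ)) hc))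
        (Set.mem_Ioi.mpr (div_pos (hπ i) hc)) h1
    have : (π i - π (i ∘ σ)) * (g i - g (i ∘ σ)) > 0 :=
      mul_pos (by linarith) (by linarith)
    linarith

end GSf
end

section
/- Let U be any real matrix with r^T rows (one per cell of I_V) satisfying UᵀX = O, where X is the design matrix. Let M be the matrix whose rows are (Δ₁^{(1)})ᵀ,…,(Δ₁^{(T−1)})ᵀ, (Δ₂^{(1)})ᵀ,…,(Δ₂^{(T−1)})ᵀ, (Δ_{V₂}^{(1)})ᵀ,…,(Δ_{V₂}^{(K−1)})ᵀ, and set Σ(π) := diag(π) − ππᵀ. If π is a positive completely symmetric probability distribution on I_V (π_i = π_j whenever j ∈ D(i)), then Uᵀ A(π) Σ(π) Mᵀ = O. (Equation (39): the cross-covariance block H₁(π)Σ(π)H₂(π)ᵀ vanishes under the S model.) -/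
open Finset

namespace GSf

variable {r T : ℕ}

/-- Index type of unordered pairs `s < t`, ordered lexicographically. -/
def PairIdx (T : ℕ) : Type := {p : Fin T × Fin T // p.1 < p.2}

instance : Fintype (PairIdx T) := Subtype.fintype _

/-- Lexicographic linear order on pairs, via the injection `(s,t) ↦ s*T + t`. -/
noncomputable instance : LinearOrder (PairIdx T) :=
  LinearOrder.lift' (fun p : PairIdx T => T * p.val.1.val + p.val.2.val) (by
    intro a b h
    have hT : 0 < T := a.val.1.pos
    simp only at h
    have h2 : a.val.2.val = b.val.2.val := by
      have hm := congrArg (· % T) h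
      simpa [Nat.mul_add_mod, Nat.mod_eq_of_lt a.val.2.isLt,
        Nat.mod_eq_of_lt b.val.2.isLt] using hm
    have h1 : a.val.1.val = b.val.1.val := by
      rw [h2] at h
      exact Nat.eq_of_mul_eq_mul_left hT (Nat.add_right_cancel h)
    exact Subtype.ext (Prod.ext (Fin.ext h1) (Fin.ext h2)))

/-- The increasing (lexicographic) enumeration of the pairs. -/
noncomputable def pairEnum (T : ℕ) : Fin (Fintype.card (PairIdx T)) ≃o PairIdx T :=
  monoEquivOfFin _ rfl

/-- The column `s_{s_k} ⊙ s_{t_k}` for the `k`-th pair in lexicographic order. -/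
noncomputable def pairCol (u : Fin r → ℝ) (k : Fin (Fintype.card (PairIdx T))) :
    Cell r T → ℝ :=
  fun i => u (i (pairEnum T k).val.1) * u (i (pairEnum T k).val.2)

/-- Indicator column of the orbit of `i₀` (a column of `X^S`). -/
def indicatorCol (i₀ : Cell r T) : Cell r T → ℝ :=
  fun i => if i ∈ orbit i₀ then 1 else 0

/-- The columns `Δ₁^{(h)}, Δ₂^{(h)}, Δ_{V₂}^{(k)}` of the design matrix. -/
noncomputable def deltaCols (u : Fin r → ℝ) : Set (Cell r T → ℝ) :=
  {v | ∃ (h : ℕ) (hh : h + 1 < T),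
      v = fun i => u (i ⟨h, Nat.lt_of_succ_lt hh⟩) - u (i ⟨h + 1, hh⟩)} ∪
  {v | ∃ (h : ℕ) (hh : h + 1 < T),
      v = fun i => u (i ⟨h, Nat.lt_of_succ_lt hh⟩) ^ 2 - u (i ⟨h + 1, hh⟩) ^ 2} ∪
  {v | ∃ (k : ℕ) (hk : k + 1 < Fintype.card (PairIdx T)),
      v = pairCol u ⟨k, Nat.lt_of_succ_lt hk⟩ - pairCol u ⟨k + 1, hk⟩}

/-- The set of columns of the design matrix `X`. -/
noncomputable def designColSet (u : Fin r → ℝ) : Set (Cell r T → ℝ) :=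
  deltaCols u ∪ {v | ∃ i₀, v = indicatorCol i₀}


/-- The Jacobian matrix `A(π)` of the map `π ↦ (F(π_i/π^S_i))_i`. -/
noncomputable def Amat (f : ℝ → ℝ) (π : Cell r T → ℝ) (i j : Cell r T) : ℝ :=
  deriv (deriv f) (π i / symmz π i) *
    ((if j = i then (symmz π i)⁻¹ else 0) -
      (if j ∈ orbit i then 1 else 0) * π i /
        (((orbit i).card : ℝ) * (symmz π i) ^ 2))

/-- The multinomial covariance matrix `Σ(π) = diag(π) - ππᵀ`. -/
noncomputable def Sigmamat (π : Cell r T → ℝ) (j l : Cell r T) : ℝ :=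
  (if l = j then π j else 0) - π j * π l

/-- equation (39): if every column of `U` is orthogonal to every
column of the design matrix `X`, then under the S model the cross-covariance block
`Uᵀ A(π) Σ(π) Mᵀ` vanishes, where the rows of `M` are the `Δ` vectors. -/
theorem stmt17 (r T : ℕ) (hr : 2 ≤ r) (hT : 2 ≤ T)
    (u : Fin r → ℝ) (hu : StrictMono u)
    (f : ℝ → ℝ) (hf1 : f 1 = 0)
    (hconv : StrictConvexOn ℝ (Set.Ioi 0) f)
    (hdiff : ∀ x ∈ Set.Ioi (0 : ℝ), DifferentiableAt ℝ f x)
    (hdiff2 : ∀ x ∈ Set.Ioi (0 : ℝ), DifferentiableAt ℝ (deriv f) x)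
    (ι : Type*) [Fintype ι]
    (U : Matrix (Cell r T) ι ℝ)
    (hUX : ∀ v ∈ designColSet u, ∀ k : ι, ∑ i, U i k * v i = 0)
    (π : Cell r T → ℝ) (hπ : ∀ i, 0 < π i) (hsum : ∑ i, π i = 1)
    (hsym : CompletelySymmetric π) :
    ∀ k : ι, ∀ m ∈ deltaCols u,
      ∑ i, ∑ j, ∑ l, U i k * Amat f π i j * Sigmamat π j l * m l = 0 := by
  intro k m hm
  classical
  set c := deriv (deriv f) 1 with hc
  have hπne : ∀ i : Cell r T, π i ≠ 0 := fun i => (hπ i).ne'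
  have hNpos : ∀ i : Cell r T, (0:ℝ) < ((orbit i).card : ℝ) := by
    intro i
    exact_mod_cast Finset.card_pos.2 ⟨i, mem_orbit_self i⟩
  have hNne : ∀ i : Cell r T, ((orbit i).card : ℝ) ≠ 0 := fun i => (hNpos i).ne'
  have hsum_orbit : ∀ i : Cell r T,
      ∑ j ∈ orbit i, π j = ((orbit i).card : ℝ) * π i := by
    intro i
    rw [Finset.sum_congr rfl (fun j hj => (hsym i j hj).symm)]
    simp [mul_comm]
  have hsymmz : ∀ i : Cell r T, symmz π i = π i := by
    intro i
    rw [symmz, hsum_orbit i]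
    exact mul_div_cancel_left₀ _ (hNne i)
  have hA : ∀ i j : Cell r T, Amat f π i j =
      c * ((if j = i then (π i)⁻¹ else 0) -
        (if j ∈ orbit i then 1 else 0) / (((orbit i).card : ℝ) * π i)) := by
    intro i j
    have key : ∀ b : ℝ, b * π i / (((orbit i).card : ℝ) * (π i) ^ 2)
        = b / (((orbit i).card : ℝ) * π i) := by
      intro b
      have hp := hπne i
      have hN := hNne i
      rw [sq]
      field_simp
    rw [Amat, hsymmz i, div_self (hπne i), key]
  have hAS : ∀ i l : Cell r T, (∑ j, Amat f π i j * Sigmamat π j l) =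
      c * ((if l = i then 1 else 0) -
        (if l ∈ orbit i then 1 else 0) / ((orbit i).card : ℝ)) := by
    intro i l
    have e1 : ∀ j, Amat f π i j * Sigmamat π j l =
        c * ((if j = i then (π i)⁻¹ * Sigmamat π j l else 0) -
          (if j ∈ orbit i then Sigmamat π j l else 0) /
            (((orbit i).card : ℝ) * π i)) := by
      intro j
      rw [hA]
      split_ifs <;> ring
    rw [Finset.sum_congr rfl (fun j _ => e1 j), ← Finset.mul_sum]
    congr 1
    rw [Finset.sum_sub_distrib, ← Finset.sum_div,
      Finset.sum_ite_eq' Finset.univ i (fun j => (π i)⁻¹ * Sigmamat π j l),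
      Finset.sum_ite_mem, Finset.univ_inter]
    have horb : ∑ j ∈ orbit i, Sigmamat π j l =
        (if l ∈ orbit i then π i else 0) - ((orbit i).card : ℝ) * (π i * π l) := by
      unfold Sigmamat
      rw [Finset.sum_sub_distrib, Finset.sum_ite_eq, ← Finset.sum_mul, hsum_orbit]
      have : (if l ∈ orbit i then π l else 0) = (if l ∈ orbit i then π i else 0) := by
        by_cases hl : l ∈ orbit i
        · simp [hl, (hsym i l hl).symm]
        · simp [hl]
      rw [this]
      ring
    rw [horb]
    simp only [Finset.mem_univ, if_true]
    unfold Sigmamat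
    have hp := hπne i
    have hN := hNne i
    split_ifs <;> field_simp <;> ring
  have hm0 : ∑ i, U i k * m i = 0 :=
    hUX m (Set.mem_union_left _ hm) k
  have hind : ∀ l : Cell r T, ∑ i, U i k * indicatorCol l i = 0 := by
    intro l
    exact hUX (indicatorCol l) (Set.mem_union_right _ ⟨l, rfl⟩) k
  have hsymmM : ∑ i, U i k * ((∑ l ∈ orbit i, m l) / ((orbit i).card : ℝ)) = 0 := by
    have step : ∀ i : Cell r T, (∑ l ∈ orbit i, m l) / ((orbit i).card : ℝ)
        = ∑ l, indicatorCol l i * (m l / ((orbit l).card : ℝ)) := by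
      intro i
      have : ∀ l : Cell r T, indicatorCol l i * (m l / ((orbit l).card : ℝ))
          = if l ∈ orbit i then m l / ((orbit i).card : ℝ) else 0 := by
        intro l
        unfold indicatorCol
        by_cases hl : l ∈ orbit i
        · rw [orbit_eq_of_mem hl]
          simp [hl, mem_orbit_self]
        · have : i ∉ orbit l := fun h => hl (mem_orbit_symm h)
          simp [hl, this]
      rw [Finset.sum_congr rfl (fun l _ => this l), Finset.sum_ite_mem,
        Finset.univ_inter, Finset.sum_div]
    calc ∑ i, U i k * ((∑ l ∈ orbit i, m l) / ((orbit i).card : ℝ))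
        = ∑ i, ∑ l, U i k * (indicatorCol l i * (m l / ((orbit l).card : ℝ))) := by
          exact Finset.sum_congr rfl fun i _ => by rw [step i, Finset.mul_sum]
      _ = ∑ l, (m l / ((orbit l).card : ℝ)) * ∑ i, U i k * indicatorCol l i := by
          rw [Finset.sum_comm]
          exact Finset.sum_congr rfl fun l _ => by
            rw [Finset.mul_sum]
            exact Finset.sum_congr rfl fun i _ => by ring
      _ = 0 := by simp [hind]
  calc ∑ i, ∑ j, ∑ l, U i k * Amat f π i j * Sigmamat π j l * m l
      = ∑ i, U i k * (c * (m i - (∑ l ∈ orbit i, m l) / ((orbit i).card : ℝ))) := by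
        refine Finset.sum_congr rfl fun i _ => ?_
        rw [Finset.sum_comm]
        have : ∀ l : Cell r T, ∑ j, U i k * Amat f π i j * Sigmamat π j l * m l
            = U i k * ((∑ j, Amat f π i j * Sigmamat π j l) * m l) := by
          intro l
          rw [Finset.sum_mul, Finset.mul_sum]
          exact Finset.sum_congr rfl fun j _ => by ring
        rw [Finset.sum_congr rfl (fun l _ => this l), ← Finset.mul_sum]
        congr 1
        have e2 : ∀ l : Cell r T, (∑ j, Amat f π i j * Sigmamat π j l) * m l
            = c * ((if l = i then m l else 0) -
                (if l ∈ orbit i then m l else 0) / ((orbit i).card : ℝ)) := by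
          intro l
          rw [hAS]
          split_ifs <;> ring
        rw [Finset.sum_congr rfl (fun l _ => e2 l), ← Finset.mul_sum]
        congr 1
        rw [Finset.sum_sub_distrib, ← Finset.sum_div,
          Finset.sum_ite_eq' Finset.univ i m, Finset.sum_ite_mem, Finset.univ_inter]
        simp
    _ = c * (∑ i, U i k * m i
          - ∑ i, U i k * ((∑ l ∈ orbit i, m l) / ((orbit i).card : ℝ))) := by
        rw [← Finset.sum_sub_distrib, Finset.mul_sum]
        exact Finset.sum_congr rfl fun i _ => by ring
    _ = 0 := by rw [hm0, hsymmM]; ring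

end GSf
end
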